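/- Let f : ℝⁿ → ℝ be measurable, finite a.e., and satisfy |{x ∈ [−R,R]ⁿ : |f(x)| > ε}| = o(Rⁿ) as R → ∞ for every ε > 0. Then for every dyadic lattice D and every λ ∈ (0, 2^{−n−2}], there exists a regular 6-Carleson family S ⊂ D such that |f(x)| ≤ Σ_{Q∈S} ω_λ(f;Q) χ_Q(x) for almost every x ∈ ℝⁿ. -/

import Mathlib

open MeasureTheory Set
open scoped ENNReal Classical

structure Cube (n : ℕ) where
  corner : Fin n → ℝ
  side : ℝ
  side_pos : 0 < side

namespace Cube

def toSet {n : ℕ} (Q : Cube n) : Set (Fin n → ℝ) :=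
  {y | ∀ i, Q.corner i ≤ y i ∧ y i < Q.corner i + Q.side}

/-- `Q'` is one of the `2^n` dyadic children of `Q`. -/
def IsChild {n : ℕ} (Q' Q : Cube n) : Prop :=
  Q'.side = Q.side / 2 ∧ ∃ ε : Fin n → Bool,
    Q'.corner = fun i => Q.corner i + (if ε i then Q.side / 2 else 0)

/-- `Q' ∈ 𝒟(Q)`: `Q'` is obtained from `Q` by iteratively taking dyadic children. -/
def IsDescendant {n : ℕ} (Q' Q : Cube n) : Prop :=
  Relation.ReflTransGen IsChild Q' Q

end Cube

/-- The three dyadic lattice axioms (DL-1), (DL-2), (DL-3). -/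
def IsDyadicLattice {n : ℕ} (D : Set (Cube n)) : Prop :=
  (∀ Q ∈ D, ∀ Q' : Cube n, Q'.IsChild Q → Q' ∈ D) ∧
  (∀ Q ∈ D, ∀ Q' ∈ D, ∃ P ∈ D, Q.IsDescendant P ∧ Q'.IsDescendant P) ∧
  (∀ K : Set (Fin n → ℝ), IsCompact K → ∃ Q ∈ D, K ⊆ Q.toSet)

/-- `S` is a `Λ`-Carleson family relative to the lattice `D`. -/
def IsCarleson {n : ℕ} (Λ : ℝ) (D S : Set (Cube n)) : Prop :=
  ∀ Q ∈ D, (∑' P : {P : Cube n // P ∈ S ∧ P.toSet ⊆ Q.toSet}, volume P.1.toSet)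
    ≤ ENNReal.ofReal Λ * volume Q.toSet

/-- `S` is an `η`-sparse family. -/
def IsSparse {n : ℕ} (η : ℝ) (S : Set (Cube n)) : Prop :=
  ∃ E : Cube n → Set (Fin n → ℝ),
    (∀ Q ∈ S, E Q ⊆ Q.toSet ∧ MeasurableSet (E Q) ∧
      ENNReal.ofReal η * volume Q.toSet ≤ volume (E Q)) ∧
    S.PairwiseDisjoint E

/-- The oscillation `sup_E f − inf_E f` of `f` on `E`, valued in `ℝ≥0∞`. -/
noncomputable def osc {n : ℕ} (f : (Fin n → ℝ) → ℝ) (E : Set (Fin n → ℝ)) : ℝ≥0∞ :=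
  ⨆ x ∈ E, ⨆ y ∈ E, ENNReal.ofReal (f x - f y)

/-- The `λ`-oscillation `ω_λ(f; Q)` of `f` on a measurable set `Q`. -/
noncomputable def oscLambda {n : ℕ} (l : ℝ) (f : (Fin n → ℝ) → ℝ)
    (Q : Set (Fin n → ℝ)) : ℝ≥0∞ :=
  ⨅ E ∈ {E : Set (Fin n → ℝ) | E ⊆ Q ∧ MeasurableSet E ∧
    ENNReal.ofReal (1 - l) * volume Q ≤ volume E}, osc f E
namespace OD
open Cube Metric Filter

variable {n : ℕ}

lemma cube_ext {P Q : Cube n} (hc : P.corner = Q.corner) (hs : P.side = Q.side) : P = Q := by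
  cases P; cases Q; simp_all

lemma toSet_eq_pi (Q : Cube n) :
    Q.toSet = Set.pi Set.univ (fun i => Set.Ico (Q.corner i) (Q.corner i + Q.side)) := by
  ext y; simp [Cube.toSet, Set.mem_pi, Set.mem_Ico]

lemma measurableSet_toSet (Q : Cube n) : MeasurableSet Q.toSet := by
  rw [toSet_eq_pi]
  exact MeasurableSet.univ_pi (fun i => measurableSet_Ico)

lemma volume_toSet (Q : Cube n) : volume Q.toSet = ENNReal.ofReal (Q.side ^ n) := by
  rw [toSet_eq_pi, volume_pi_pi]
  simp only [Real.volume_Ico, add_sub_cancel_left]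
  rw [Finset.prod_const, ENNReal.ofReal_pow Q.side_pos.le]
  simp

lemma volume_toSet_pos (Q : Cube n) : 0 < volume Q.toSet := by
  rw [volume_toSet]
  exact ENNReal.ofReal_pos.2 (pow_pos Q.side_pos n)

lemma volume_toSet_ne_top (Q : Cube n) : volume Q.toSet ≠ ⊤ := by
  rw [volume_toSet]; exact ENNReal.ofReal_ne_top

lemma corner_mem_toSet (Q : Cube n) : Q.corner ∈ Q.toSet := by
  intro i; exact ⟨le_refl _, by linarith [Q.side_pos]⟩

lemma toSet_nonempty (Q : Cube n) : Q.toSet.Nonempty := ⟨Q.corner, corner_mem_toSet Q⟩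

lemma child_subset {P Q : Cube n} (h : P.IsChild Q) : P.toSet ⊆ Q.toSet := by
  obtain ⟨hs, ε, hc⟩ := h
  intro y hy i
  have h1 := hy i
  rw [hc] at h1; rw [hs] at h1
  have hsp := Q.side_pos
  constructor
  · rcases h1 with ⟨ha, _⟩
    by_cases hb : ε i <;> simp [hb] at ha <;> linarith
  · rcases h1 with ⟨_, hb'⟩
    by_cases hb : ε i <;> simp [hb] at hb' <;> linarith

/-- descendant at a fixed generation -/
def DescAt : ℕ → Cube n → Cube n → Prop
  | 0 => fun P Q => P = Q
  | (m+1) => fun P Q => ∃ C : Cube n, DescAt m P C ∧ C.IsChild Q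

lemma descAt_zero {P Q : Cube n} (h : DescAt 0 P Q) : P = Q := h

lemma DescAt.toDesc {m : ℕ} {P Q : Cube n} (h : DescAt m P Q) : P.IsDescendant Q := by
  induction m generalizing Q with
  | zero => rw [h]; exact Relation.ReflTransGen.refl
  | succ m ih =>
    obtain ⟨C, h1, h2⟩ := h
    exact Relation.ReflTransGen.tail (ih h1) h2

lemma isDescendant_iff {P Q : Cube n} : P.IsDescendant Q ↔ ∃ m, DescAt m P Q := by
  constructor
  · intro h
    induction h with
    | refl => exact ⟨0, rfl⟩
    | tail hbc hcd ih =>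
      obtain ⟨m, hm⟩ := ih
      exact ⟨m+1, _, hm, hcd⟩
  · rintro ⟨m, hm⟩; exact hm.toDesc

lemma descAt_side {m : ℕ} {P Q : Cube n} (h : DescAt m P Q) : P.side = Q.side / 2 ^ m := by
  induction m generalizing Q with
  | zero => rw [h]; simp
  | succ m ih =>
    obtain ⟨C, h1, h2⟩ := h
    rw [ih h1, h2.1]
    rw [div_div]; ring_nf

lemma descAt_trans {a b : ℕ} {P C Q : Cube n} (h1 : DescAt a P C) (h2 : DescAt b C Q) :
    DescAt (a + b) P Q := by
  induction b generalizing Q with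
  | zero => simpa using descAt_zero h2 ▸ h1
  | succ b ih =>
    obtain ⟨W, hw1, hw2⟩ := h2
    exact ⟨W, ih hw1, hw2⟩

lemma descAt_subset {m : ℕ} {P Q : Cube n} (h : DescAt m P Q) : P.toSet ⊆ Q.toSet := by
  induction m generalizing Q with
  | zero => rw [h]
  | succ m ih =>
    obtain ⟨C, h1, h2⟩ := h
    exact Set.Subset.trans (ih h1) (child_subset h2)

lemma desc_subset {P Q : Cube n} (h : P.IsDescendant Q) : P.toSet ⊆ Q.toSet := by
  obtain ⟨m, hm⟩ := isDescendant_iff.1 h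
  exact descAt_subset hm

lemma desc_side_le {P Q : Cube n} (h : P.IsDescendant Q) : P.side ≤ Q.side := by
  obtain ⟨m, hm⟩ := isDescendant_iff.1 h
  rw [descAt_side hm]
  have h2 : (1:ℝ) ≤ 2 ^ m := one_le_pow₀ (by norm_num)
  rw [div_le_iff₀ (by positivity)]
  nlinarith [Q.side_pos]

lemma descAt_unique {a b : ℕ} {P Q : Cube n} (h1 : DescAt a P Q) (h2 : DescAt b P Q) :
    a = b := by
  have e1 := descAt_side h1
  have e2 := descAt_side h2
  rw [e1] at e2
  have hsp := Q.side_pos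
  have h2a : (0:ℝ) < 2 ^ a := by positivity
  have h2b : (0:ℝ) < 2 ^ b := by positivity
  rw [div_eq_div_iff (by positivity) (by positivity)] at e2
  have h3 : (2:ℝ) ^ b = 2 ^ a := by
    have := mul_left_cancel₀ (a := Q.side) hsp.ne' (by linarith : Q.side * (2:ℝ)^b = Q.side * 2^a)
    exact this
  have : b = a := Nat.pow_right_injective (le_refl 2) (by exact_mod_cast h3)
  omega

lemma desc_eq_of_side_eq {P Q : Cube n} (h : P.IsDescendant Q) (hs : P.side = Q.side) :
    P = Q := by
  obtain ⟨m, hm⟩ := isDescendant_iff.1 h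
  have e1 := descAt_side hm
  have hsp := Q.side_pos
  have hm0 : m = 0 := by
    by_contra hne
    have h2 : (2:ℝ) ≤ 2 ^ m := by
      calc (2:ℝ) = 2^1 := by norm_num
      _ ≤ 2 ^ m := by
        apply pow_le_pow_right₀ (by norm_num)
        omega
    rw [hs] at e1
    rw [eq_div_iff (by positivity)] at e1
    nlinarith
  rw [hm0] at hm
  exact hm

lemma desc_antisymm {P Q : Cube n} (h1 : P.IsDescendant Q) (h2 : Q.IsDescendant P) : P = Q := by
  have := desc_side_le h1
  have := desc_side_le h2
  exact desc_eq_of_side_eq h1 (le_antisymm ‹P.side ≤ Q.side› ‹Q.side ≤ P.side›)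

lemma exists_child_mem {Q : Cube n} {x : Fin n → ℝ} (hx : x ∈ Q.toSet) :
    ∃ P : Cube n, P.IsChild Q ∧ x ∈ P.toSet := by
  have hsp := Q.side_pos
  refine ⟨⟨fun i => Q.corner i + (if (decide (Q.corner i + Q.side/2 ≤ x i) : Bool) then Q.side / 2 else 0),
    Q.side / 2, by positivity⟩, ⟨rfl, ⟨fun i => decide (Q.corner i + Q.side/2 ≤ x i), rfl⟩⟩, ?_⟩
  intro i
  have h1 := hx i
  by_cases hc : Q.corner i + Q.side/2 ≤ x i
  · have hd : decide (Q.corner i + Q.side/2 ≤ x i) = true := decide_eq_true hc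
    simp only [hd, if_true]
    exact ⟨hc, by linarith [h1.2]⟩
  · have hd : decide (Q.corner i + Q.side/2 ≤ x i) = false := decide_eq_false hc
    simp only [hd, Bool.false_eq_true, if_false]
    push_neg at hc
    rw [add_zero]
    exact ⟨h1.1, by linarith⟩

lemma child_eq_of_mem {P₁ P₂ Q : Cube n} (h1 : P₁.IsChild Q) (h2 : P₂.IsChild Q)
    {y : Fin n → ℝ} (hy1 : y ∈ P₁.toSet) (hy2 : y ∈ P₂.toSet) : P₁ = P₂ := by
  obtain ⟨hs1, ε₁, hc1⟩ := h1
  obtain ⟨hs2, ε₂, hc2⟩ := h2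
  have hsp := Q.side_pos
  apply cube_ext _ (by rw [hs1, hs2])
  rw [hc1, hc2]
  funext i
  have a1 := hy1 i
  have a2 := hy2 i
  rw [hc1, hs1] at a1
  rw [hc2, hs2] at a2
  simp only at a1 a2
  by_cases e1 : ε₁ i <;> by_cases e2 : ε₂ i <;> simp [e1, e2] at a1 a2 ⊢ <;> linarith

lemma descAt_succ_top {m : ℕ} {P Q : Cube n} :
    DescAt (m+1) P Q ↔ ∃ C : Cube n, DescAt m P C ∧ C.IsChild Q := Iff.rfl

lemma descAt_succ_bot {m : ℕ} {P Q : Cube n} (h : DescAt (m+1) P Q) :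
    ∃ C : Cube n, P.IsChild C ∧ DescAt m C Q := by
  induction m generalizing Q with
  | zero =>
    obtain ⟨C, h1, h2⟩ := h
    exact ⟨Q, by rw [descAt_zero h1]; exact h2, rfl⟩
  | succ m ih =>
    obtain ⟨C, h1, h2⟩ := h
    obtain ⟨W, hw1, hw2⟩ := ih h1
    exact ⟨W, hw1, C, hw2, h2⟩

/-- Key nesting lemma: deeper descendants sharing a point are descendants. -/
lemma desc_of_descAt_mem {a b : ℕ} {P Q W : Cube n} (hab : b ≤ a)
    (hP : DescAt a P W) (hQ : DescAt b Q W) {y : Fin n → ℝ}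
    (hyP : y ∈ P.toSet) (hyQ : y ∈ Q.toSet) : P.IsDescendant Q := by
  induction b generalizing a W with
  | zero => rw [descAt_zero hQ]; exact hP.toDesc
  | succ b ih =>
    obtain ⟨CQ, hq1, hq2⟩ := hQ
    obtain ⟨a', rfl⟩ : ∃ a', a = a' + 1 := ⟨a - 1, by omega⟩
    obtain ⟨CP, hp1, hp2⟩ := hP
    have hCeq : CP = CQ :=
      child_eq_of_mem hp2 hq2 (descAt_subset hp1 hyP) (descAt_subset hq1 hyQ)
    subst hCeq
    exact ih (by omega) hp1 hq1


lemma desc_mem_D {D : Set (Cube n)} (hD : IsDyadicLattice D) {P Q : Cube n}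
    (hQ : Q ∈ D) (h : P.IsDescendant Q) : P ∈ D := by
  obtain ⟨m, hm⟩ := isDescendant_iff.1 h
  induction m generalizing Q with
  | zero => rw [descAt_zero hm]; exact hQ
  | succ m ih =>
    obtain ⟨C, h1, h2⟩ := hm
    exact ih (hD.1 Q hQ C h2) h1.toDesc h1

/-- Any two intersecting cubes of a dyadic lattice are nested (as descendants). -/
lemma desc_or_desc {D : Set (Cube n)} (hD : IsDyadicLattice D) {P Q : Cube n}
    (hP : P ∈ D) (hQ : Q ∈ D) {y : Fin n → ℝ} (hyP : y ∈ P.toSet) (hyQ : y ∈ Q.toSet) :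
    P.IsDescendant Q ∨ Q.IsDescendant P := by
  obtain ⟨W, _, h1, h2⟩ := hD.2.1 P hP Q hQ
  obtain ⟨a, ha⟩ := isDescendant_iff.1 h1
  obtain ⟨b, hb⟩ := isDescendant_iff.1 h2
  rcases le_total b a with hab | hab
  · exact Or.inl (desc_of_descAt_mem hab ha hb hyP hyQ)
  · exact Or.inr (desc_of_descAt_mem hab hb ha hyQ hyP)

lemma side_lt_of_ne_desc {P Q : Cube n} (h : P.IsDescendant Q) (hne : P ≠ Q) :
    P.side < Q.side := by
  rcases lt_or_eq_of_le (desc_side_le h) with h' | h'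
  · exact h'
  · exact absurd (desc_eq_of_side_eq h h') hne

/-- In dimension ≥ 1, set inclusion of lattice cubes implies descendancy. -/
lemma desc_of_subset (hn : 0 < n) {D : Set (Cube n)} (hD : IsDyadicLattice D) {P Q : Cube n}
    (hP : P ∈ D) (hQ : Q ∈ D) (hsub : P.toSet ⊆ Q.toSet) : P.IsDescendant Q := by
  have hyP : P.corner ∈ P.toSet := corner_mem_toSet P
  rcases desc_or_desc hD hP hQ hyP (hsub hyP) with h | h
  · exact h
  · -- Q is a descendant of P and P.toSet ⊆ Q.toSet: so sides are equal
    have h1 : Q.side ≤ P.side := desc_side_le h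
    have h2 : volume P.toSet ≤ volume Q.toSet := measure_mono hsub
    rw [volume_toSet, volume_toSet] at h2
    have h3 : P.side ^ n ≤ Q.side ^ n := by
      have := (ENNReal.ofReal_le_ofReal_iff (pow_pos Q.side_pos n).le).1 h2
      exact this
    have h4 : P.side ≤ Q.side := by
      by_contra hcon
      push_neg at hcon
      have := pow_lt_pow_left₀ hcon Q.side_pos.le (by omega : n ≠ 0)
      linarith
    have := desc_eq_of_side_eq h (le_antisymm h1 h4)
    rw [this]
    exact Relation.ReflTransGen.refl

lemma exists_descAt_mem {Q : Cube n} {x : Fin n → ℝ} (hx : x ∈ Q.toSet) (m : ℕ) :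
    ∃ P : Cube n, DescAt m P Q ∧ x ∈ P.toSet := by
  induction m with
  | zero => exact ⟨Q, rfl, hx⟩
  | succ m ih =>
    obtain ⟨P, h1, h2⟩ := ih
    obtain ⟨C, hc1, hc2⟩ := exists_child_mem h2
    have hstep : DescAt 1 C P := ⟨C, rfl, hc1⟩
    have := descAt_trans hstep h1
    rw [Nat.add_comm] at this
    exact ⟨C, this, hc2⟩

lemma toSet_subset_closedBall {Q : Cube n} {x : Fin n → ℝ} (hx : x ∈ Q.toSet) :
    Q.toSet ⊆ Metric.closedBall x Q.side := by
  intro y hy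
  rw [Metric.mem_closedBall]
  rw [dist_pi_le_iff Q.side_pos.le]
  intro i
  have h1 := hx i
  have h2 := hy i
  rw [Real.dist_eq, abs_le]
  constructor <;> linarith

lemma volume_closedBall_side (x : Fin n → ℝ) {r : ℝ} (hr : 0 ≤ r) :
    volume (Metric.closedBall x r) = ENNReal.ofReal ((2*r) ^ n) := by
  rw [Real.volume_pi_closedBall x hr]
  simp


/-! ### Quantiles and measure helpers -/

variable (f : (Fin n → ℝ) → ℝ)

def nuSet (c : ℝ) (Q : Cube n) : Set ℝ :=
  {t | 0 ≤ t ∧ volume ({y | t < |f y|} ∩ Q.toSet) ≤ ENNReal.ofReal c * volume Q.toSet}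

noncomputable def nu (c : ℝ) (Q : Cube n) : ℝ := sInf (nuSet f c Q)

variable {f}

lemma measurableSet_abs_gt (hf : Measurable f) (t : ℝ) :
    MeasurableSet {y : Fin n → ℝ | t < |f y|} :=
  measurableSet_lt measurable_const hf.abs

lemma nuSet_bddBelow (c : ℝ) (Q : Cube n) : BddBelow (nuSet f c Q) :=
  ⟨0, fun _ ht => ht.1⟩

lemma nuSet_upward {c : ℝ} {Q : Cube n} {t t' : ℝ} (ht : t ∈ nuSet f c Q) (h : t ≤ t') :
    t' ∈ nuSet f c Q := by
  refine ⟨le_trans ht.1 h, le_trans (measure_mono ?_) ht.2⟩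
  exact Set.inter_subset_inter_left _ (fun y hy => lt_of_le_of_lt h hy)

lemma nuSet_nonempty (hf : Measurable f) {c : ℝ} (hc : 0 < c) (Q : Cube n) :
    (nuSet f c Q).Nonempty := by
  have hvol := volume_toSet_pos Q
  have hfin := volume_toSet_ne_top Q
  have hmeas : ∀ k : ℕ, MeasurableSet ({y : Fin n → ℝ | (k:ℝ) < |f y|} ∩ Q.toSet) :=
    fun k => (measurableSet_abs_gt hf _).inter (measurableSet_toSet Q)
  have hanti : Antitone (fun k : ℕ => {y : Fin n → ℝ | (k:ℝ) < |f y|} ∩ Q.toSet) := by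
    intro a b hab
    refine Set.inter_subset_inter_left _ (fun y hy => ?_)
    have hy' : (b:ℝ) < |f y| := hy
    exact show (a:ℝ) < |f y| from lt_of_le_of_lt (by exact_mod_cast hab) hy'
  have hempty : (⋂ k : ℕ, {y : Fin n → ℝ | (k:ℝ) < |f y|} ∩ Q.toSet) = ∅ := by
    ext y
    simp only [Set.mem_iInter, Set.mem_inter_iff, Set.mem_setOf_eq, Set.mem_empty_iff_false,
      iff_false, not_forall]
    obtain ⟨k, hk⟩ := exists_nat_gt |f y|
    exact ⟨k, fun h => absurd h.1 (not_lt.2 hk.le)⟩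
  have htend : Filter.Tendsto (fun k : ℕ => volume ({y : Fin n → ℝ | (k:ℝ) < |f y|} ∩ Q.toSet))
      Filter.atTop (nhds 0) := by
    have := MeasureTheory.tendsto_measure_iInter_atTop (μ := volume)
      (fun k => (hmeas k).nullMeasurableSet) hanti
      ⟨0, ne_top_of_le_ne_top hfin (measure_mono Set.inter_subset_right)⟩
    rw [hempty] at this
    simpa [Function.comp_def] using this
  have hpos : (0:ℝ≥0∞) < ENNReal.ofReal c * volume Q.toSet :=
    ENNReal.mul_pos (ENNReal.ofReal_pos.2 hc).ne' hvol.ne'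
  have := htend.eventually_lt_const hpos
  obtain ⟨k, hk⟩ := this.exists
  exact ⟨k, Nat.cast_nonneg k, hk.le⟩

lemma nu_nonneg (c : ℝ) (Q : Cube n) : 0 ≤ nu f c Q := by
  by_cases h : (nuSet f c Q).Nonempty
  · exact le_csInf h (fun t ht => ht.1)
  · rw [nu, Set.not_nonempty_iff_eq_empty.1 h, Real.sInf_empty]

lemma nu_measure_le (hf : Measurable f) {c : ℝ} (hc : 0 < c) (Q : Cube n) :
    volume ({y | nu f c Q < |f y|} ∩ Q.toSet) ≤ ENNReal.ofReal c * volume Q.toSet := by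
  have hne := nuSet_nonempty hf hc Q
  have hbdd := nuSet_bddBelow (f := f) c Q
  have hmem : ∀ k : ℕ, nu f c Q + 1/(k+1) ∈ nuSet f c Q := by
    intro k
    have hlt : nu f c Q < nu f c Q + 1/(k+1) := by
      have : (0:ℝ) < 1/((k:ℝ)+1) := by positivity
      linarith
    obtain ⟨t, ht, htlt⟩ := (csInf_lt_iff hbdd hne).1 hlt
    exact nuSet_upward ht htlt.le
  have hunion : {y : Fin n → ℝ | nu f c Q < |f y|} ∩ Q.toSet
      = ⋃ k : ℕ, ({y | nu f c Q + 1/(k+1) < |f y|} ∩ Q.toSet) := by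
    apply Set.Subset.antisymm
    · rintro y ⟨hy, hyQ⟩
      have hy' : nu f c Q < |f y| := hy
      obtain ⟨k, hk⟩ := exists_nat_one_div_lt (by linarith : (0:ℝ) < |f y| - nu f c Q)
      refine Set.mem_iUnion.2 ⟨k, ⟨?_, hyQ⟩⟩
      show nu f c Q + 1/((k:ℝ)+1) < |f y|
      push_cast at hk ⊢
      linarith
    · intro y hy
      obtain ⟨k, hk, hyQ⟩ := Set.mem_iUnion.1 hy
      have hk' : nu f c Q + 1/((k:ℝ)+1) < |f y| := hk
      have hpos : (0:ℝ) < 1/((k:ℝ)+1) := by positivity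
      exact ⟨by show nu f c Q < |f y|; linarith, hyQ⟩
  rw [hunion]
  have hmono : Monotone (fun k : ℕ => {y : Fin n → ℝ | nu f c Q + 1/(k+1) < |f y|} ∩ Q.toSet) := by
    intro a b hab
    refine Set.inter_subset_inter_left _ (fun y hy => ?_)
    have hy' : nu f c Q + 1/((a:ℝ)+1) < |f y| := hy
    have hab' : 1/((b:ℝ)+1) ≤ 1/((a:ℝ)+1) := by
      apply one_div_le_one_div_of_le (by positivity)
      exact_mod_cast by omega
    show nu f c Q + 1/((b:ℝ)+1) < |f y|
    linarith
  rw [Directed.measure_iUnion hmono.directed_le]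
  exact iSup_le (fun k => (hmem k).2)


lemma nu_measure_gt (hf : Measurable f) {c : ℝ} (hc0 : 0 < c) (hc : c < 1) (Q : Cube n)
    {t : ℝ} (ht : t < nu f c Q) :
    ENNReal.ofReal c * volume Q.toSet < volume ({y | t < |f y|} ∩ Q.toSet) := by
  rcases lt_or_ge t 0 with htneg | htpos
  · have heq : {y : Fin n → ℝ | t < |f y|} ∩ Q.toSet = Q.toSet := by
      apply Set.inter_eq_self_of_subset_right
      intro y _
      exact lt_of_lt_of_le htneg (abs_nonneg _)
    rw [heq]
    calc ENNReal.ofReal c * volume Q.toSet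
        < 1 * volume Q.toSet := by
          apply ENNReal.mul_lt_mul_iff_left (volume_toSet_pos Q).ne' (volume_toSet_ne_top Q) |>.2
          exact lt_of_lt_of_le (ENNReal.ofReal_lt_ofReal_iff_of_nonneg hc0.le |>.2 hc)
            (by simp)
      _ = volume Q.toSet := one_mul _
  · by_contra hcon
    push_neg at hcon
    have : t ∈ nuSet f c Q := ⟨htpos, hcon⟩
    exact absurd (csInf_le (nuSet_bddBelow c Q) this) (not_le.2 ht)

/-- If `E` is an admissible set for the `l`-oscillation on `W` and `B ⊆ W` has measure
`> l·|W|`, then `B` meets `E`. -/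
lemma meets_of_measure {l : ℝ} (hl0 : 0 < l) (hl1 : l < 1) {W : Cube n}
    {E B : Set (Fin n → ℝ)} (hE : E ⊆ W.toSet) (hEm : MeasurableSet E)
    (hEv : ENNReal.ofReal (1 - l) * volume W.toSet ≤ volume E)
    (hB : B ⊆ W.toSet) (hBv : ENNReal.ofReal l * volume W.toSet < volume B) :
    (B ∩ E).Nonempty := by
  rw [Set.nonempty_iff_ne_empty]
  intro hcon
  have hdiff : volume (W.toSet \ E) ≤ ENNReal.ofReal l * volume W.toSet := by
    rw [measure_diff hE hEm.nullMeasurableSet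
      (ne_top_of_le_ne_top (volume_toSet_ne_top W) (measure_mono hE))]
    rw [tsub_le_iff_right]
    calc volume W.toSet = ENNReal.ofReal ((1-l) + l) * volume W.toSet := by
          rw [show (1-l) + l = 1 by ring]; simp
      _ = (ENNReal.ofReal (1-l) + ENNReal.ofReal l) * volume W.toSet := by
          rw [ENNReal.ofReal_add (by linarith) hl0.le]
      _ = ENNReal.ofReal (1-l) * volume W.toSet + ENNReal.ofReal l * volume W.toSet := by
          rw [add_mul]
      _ ≤ ENNReal.ofReal l * volume W.toSet + volume E := by
          rw [add_comm]
          exact add_le_add_right hEv _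
  have hBsub : B ⊆ W.toSet \ E := by
    intro y hy
    refine ⟨hB hy, fun hyE => ?_⟩
    rw [Set.eq_empty_iff_forall_notMem] at hcon
    exact hcon y ⟨hy, hyE⟩
  exact absurd (le_trans (measure_mono hBsub) hdiff) (not_le.2 hBv)

lemma le_osc_pair {E : Set (Fin n → ℝ)} {y₁ y₂ : Fin n → ℝ} (h1 : y₁ ∈ E) (h2 : y₂ ∈ E) :
    ENNReal.ofReal (|f y₁| - |f y₂|) ≤ osc f E := by
  have ha : ENNReal.ofReal (f y₁ - f y₂) ≤ osc f E := by
    refine le_trans ?_ (le_iSup₂ (f := fun x (_ : x ∈ E) => ⨆ y ∈ E, ENNReal.ofReal (f x - f y)) y₁ h1)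
    exact le_iSup₂ (f := fun y (_ : y ∈ E) => ENNReal.ofReal (f y₁ - f y)) y₂ h2
  have hb : ENNReal.ofReal (f y₂ - f y₁) ≤ osc f E := by
    refine le_trans ?_ (le_iSup₂ (f := fun x (_ : x ∈ E) => ⨆ y ∈ E, ENNReal.ofReal (f x - f y)) y₂ h2)
    exact le_iSup₂ (f := fun y (_ : y ∈ E) => ENNReal.ofReal (f y₂ - f y)) y₁ h1
  rcases le_total 0 (f y₁) with hs | hs
  · refine le_trans (ENNReal.ofReal_le_ofReal ?_) ha
    rw [abs_of_nonneg hs]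
    have := le_abs_self (f y₂)
    linarith
  · refine le_trans (ENNReal.ofReal_le_ofReal ?_) hb
    rw [abs_of_nonpos hs]
    have := neg_abs_le (f y₂)
    linarith

lemma ofReal_le_of_forall_sub {t : ℝ} {x : ℝ≥0∞}
    (h : ∀ ε : ℝ, 0 < ε → ENNReal.ofReal (t - ε) ≤ x) : ENNReal.ofReal t ≤ x := by
  have htend : Filter.Tendsto (fun k : ℕ => ENNReal.ofReal (t - 1/(k+1))) Filter.atTop
      (nhds (ENNReal.ofReal t)) := by
    apply (ENNReal.continuous_ofReal.tendsto t).comp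
    have : Filter.Tendsto (fun k : ℕ => 1/((k:ℝ)+1)) Filter.atTop (nhds 0) :=
      tendsto_one_div_add_atTop_nhds_zero_nat
    simpa using Filter.Tendsto.sub (tendsto_const_nhds (x := t)) this
  refine le_of_tendsto htend (Filter.Eventually.of_forall (fun k => h _ (by positivity)))


/-! ### Lebesgue density along shrinking cubes -/

lemma ae_cube_density {A : Set (Fin n → ℝ)} (hA : MeasurableSet A) {c : ℝ} (hc0 : 0 ≤ c) (hc : c < 1) :
    ∀ᵐ x : Fin n → ℝ, x ∈ A → ∀ Qs : ℕ → Cube n, (∀ j, x ∈ (Qs j).toSet) →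
      Filter.Tendsto (fun j => (Qs j).side) Filter.atTop (nhds 0) →
      ∀ᶠ j in Filter.atTop,
        ENNReal.ofReal c * volume (Qs j).toSet < volume (A ∩ (Qs j).toSet) := by
  filter_upwards [Besicovitch.ae_tendsto_measure_inter_div_of_measurableSet volume hA]
    with x hx hmem Qs hQs htend
  rw [Set.indicator_of_mem hmem] at hx
  simp only [Pi.one_apply] at hx
  -- compose with the sides tending to zero within (0, ∞)
  have hcomp : Filter.Tendsto (fun j => volume (A ∩ Metric.closedBall x (Qs j).side) /
      volume (Metric.closedBall x (Qs j).side)) Filter.atTop (nhds 1) := by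
    apply hx.comp
    rw [tendsto_nhdsWithin_iff]
    exact ⟨htend, Filter.Eventually.of_forall (fun j => (Qs j).side_pos)⟩
  set d : ℝ := 1 - (1-c)/2^(n+1) with hd
  have hd1 : d < 1 := by
    have h1 : (0:ℝ) < (1-c)/2^(n+1) := div_pos (by linarith) (by positivity)
    simp only [hd]; linarith
  have hdlt : (ENNReal.ofReal d) < 1 := ENNReal.ofReal_lt_one.2 hd1
  have hev := hcomp.eventually_const_lt hdlt
  filter_upwards [hev] with j hj
  set s : ℝ := (Qs j).side with hs
  have hsp : 0 < s := (Qs j).side_pos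
  have hQcb : (Qs j).toSet ⊆ Metric.closedBall x s := toSet_subset_closedBall (hQs j)
  have hvolcb : volume (Metric.closedBall x s) = ENNReal.ofReal ((2*s)^n) :=
    volume_closedBall_side x hsp.le
  have hvolQ : volume (Qs j).toSet = ENNReal.ofReal (s^n) := volume_toSet (Qs j)
  have hcbne : volume (Metric.closedBall x s) ≠ ⊤ := by rw [hvolcb]; exact ENNReal.ofReal_ne_top
  have hcbpos : volume (Metric.closedBall x s) ≠ 0 := by
    rw [hvolcb]; exact (ENNReal.ofReal_pos.2 (by positivity)).ne'
  -- from the ratio bound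
  have hAcb : ENNReal.ofReal d * volume (Metric.closedBall x s) <
      volume (A ∩ Metric.closedBall x s) := by
    rw [← ENNReal.lt_div_iff_mul_lt (Or.inl hcbpos) (Or.inl hcbne)]
    exact hj
  -- covering: A ∩ cB ⊆ (A ∩ Q) ∪ (cB \ Q)
  have hcover : A ∩ Metric.closedBall x s ⊆ (A ∩ (Qs j).toSet) ∪
      (Metric.closedBall x s \ (Qs j).toSet) := by
    rintro y ⟨hyA, hycb⟩
    by_cases hyQ : y ∈ (Qs j).toSet
    · exact Or.inl ⟨hyA, hyQ⟩
    · exact Or.inr ⟨hycb, hyQ⟩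
  have hdiffvol : volume (Metric.closedBall x s \ (Qs j).toSet)
      = ENNReal.ofReal ((2*s)^n - s^n) := by
    rw [measure_diff hQcb (measurableSet_toSet (Qs j)).nullMeasurableSet
      (volume_toSet_ne_top (Qs j)), hvolcb, hvolQ,
      ENNReal.ofReal_sub _ (by positivity)]
  have hkey : volume (A ∩ Metric.closedBall x s) ≤
      volume (A ∩ (Qs j).toSet) + ENNReal.ofReal ((2*s)^n - s^n) := by
    rw [← hdiffvol]
    exact le_trans (measure_mono hcover) (measure_union_le _ _)
  -- numeric comparison
  have hpow : (2*s)^n = 2^n * s^n := mul_pow 2 s n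
  have hsn : (0:ℝ) < s^n := pow_pos hsp n
  have h2n : (0:ℝ) < 2^n := by positivity
  have hmono : s^n ≤ (2*s)^n := by
    apply pow_le_pow_left₀ hsp.le
    linarith
  have hnum : ENNReal.ofReal c * volume (Qs j).toSet + ENNReal.ofReal ((2*s)^n - s^n)
      < ENNReal.ofReal d * volume (Metric.closedBall x s) := by
    rw [hvolQ, hvolcb, ← ENNReal.ofReal_mul hc0, ← ENNReal.ofReal_add (by positivity) (by linarith),
      ← ENNReal.ofReal_mul (by
        have h2 : (2:ℝ) ≤ 2^(n+1) := by
          calc (2:ℝ) = 2^1 := by norm_num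
          _ ≤ 2^(n+1) := by apply pow_le_pow_right₀ (by norm_num); omega
        have h1 : (1-c)/2^(n+1) ≤ 1/2 := div_le_div₀ (by norm_num) (by linarith) (by norm_num) h2
        simp only [hd]
        linarith)]
    apply ENNReal.ofReal_lt_ofReal_iff_of_nonneg
      (add_nonneg (mul_nonneg hc0 (by positivity)) (by nlinarith [mul_pow 2 s n, pow_pos hsp n,
        (by positivity : (0:ℝ) < (2:ℝ)^n)])) |>.2
    have hps : (2:ℝ)^(n+1) = 2^n * 2 := pow_succ 2 n
    have hd' : d * (2*s)^n = (2*s)^n - (1-c)*s^n/2 := by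
      rw [hd, hpow, hps]
      field_simp
    rw [hd']
    nlinarith
  have hdifftop : ENNReal.ofReal ((2*s)^n - s^n) ≠ ⊤ := ENNReal.ofReal_ne_top
  have hchain : ENNReal.ofReal c * volume (Qs j).toSet + ENNReal.ofReal ((2*s)^n - s^n)
      < volume (A ∩ (Qs j).toSet) + ENNReal.ofReal ((2*s)^n - s^n) :=
    lt_of_lt_of_le (lt_of_lt_of_le hnum hAcb.le) hkey
  exact (ENNReal.add_lt_add_iff_right hdifftop).1 hchain


/-! ### The stopping-time construction -/

noncomputable def lamp (l : ℝ) : ℝ := 17/16 * l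

noncomputable def Lami (n : ℕ) (l : ℝ) : ℝ := (1 - 3/2 * l) / 2^n

variable (f)
variable (l : ℝ) (D : Set (Cube n)) (T : ℕ → Cube n)

def bigA (Q : Cube n) : Set (Fin n → ℝ) := {y | nu f (lamp l) Q < |f y|} ∩ Q.toSet

def cand (Q : Cube n) : Set (Cube n) :=
  {R | R ∈ D ∧ R.IsDescendant Q ∧ R ≠ Q ∧
    (ENNReal.ofReal (Lami n l) * volume R.toSet < volume (bigA f l Q ∩ R.toSet) ∨ ∃ k, R = T k)}

def childrenOf (Q : Cube n) : Set (Cube n) :=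
  {R | R ∈ cand f l D T Q ∧ ∀ R' ∈ cand f l D T Q, R.IsDescendant R' → R = R'}

def lvl (R : Cube n) : ℕ → Set (Cube n)
  | 0 => {R}
  | (d+1) => {P | ∃ Q ∈ lvl R d, P ∈ childrenOf f l D T Q}

def Sfam : Set (Cube n) := {P | ∃ k d, P ∈ lvl f l D T (T k) d}

def Edef (Q : Cube n) : Set (Fin n → ℝ) :=
  Q.toSet \ ⋃ R ∈ childrenOf f l D T Q, R.toSet

variable {f l D T}

section Params
variable (hn : 0 < n) (hl0 : 0 < l) (hl2 : l ≤ 1/2^(n+2))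

include hl0 hl2 in
lemma lamp_pos : 0 < lamp l := by rw [lamp]; linarith

include hn hl0 hl2 in
lemma l_le_eighth : l ≤ 1/8 := by
  have h2 : (8:ℝ) ≤ 2^(n+2) := by
    calc (8:ℝ) = 2^3 := by norm_num
    _ ≤ 2^(n+2) := by apply pow_le_pow_right₀ (by norm_num); omega
  have := one_div_le_one_div_of_le (by norm_num : (0:ℝ) < 8) h2
  linarith

include hn hl0 hl2 in
lemma lamp_lt_one : lamp l < 1 := by
  have := l_le_eighth hn hl0 hl2
  rw [lamp]; linarith

include hn hl0 hl2 in
lemma Lami_pos : 0 < Lami n l := by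
  have := l_le_eighth hn hl0 hl2
  rw [Lami]
  apply div_pos (by linarith) (by positivity)

include hn hl0 hl2 in
lemma Lami_lt_one : Lami n l < 1 := by
  have := l_le_eighth hn hl0 hl2
  rw [Lami]
  rw [div_lt_one (by positivity)]
  have h2 : (1:ℝ) ≤ 2^n := one_le_pow₀ (by norm_num)
  linarith

include hn hl0 hl2 in
lemma pow_l_bound : 2^n * l ≤ 1/4 := by
  have h1 : (2:ℝ)^(n+2) = 2^n * 4 := by rw [pow_add]; norm_num
  have h2 : (0:ℝ) < 2^n := by positivity
  have h3 : (2:ℝ)^n * (1/2^(n+2)) = 1/4 := by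
    rw [h1]; field_simp
  nlinarith [mul_le_mul_of_nonneg_left hl2 h2.le]

include hn hl0 hl2 in
lemma theta_bound : lamp l / Lami n l + 1/2^n ≤ 43/52 := by
  have hl8 := l_le_eighth hn hl0 hl2
  have hpl := pow_l_bound hn hl0 hl2
  have h2 : (0:ℝ) < 2^n := by positivity
  have h2n : (2:ℝ) ≤ 2^n := by
    calc (2:ℝ) = 2^1 := by norm_num
    _ ≤ 2^n := by apply pow_le_pow_right₀ (by norm_num); omega
  have h13 : (0:ℝ) < 1 - 3/2*l := by linarith
  have heq : lamp l / Lami n l = 17/16 * l * 2^n / (1 - 3/2*l) := by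
    rw [lamp, Lami]
    field_simp
  rw [heq]
  have hinv : 1/(2:ℝ)^n ≤ 1/2 := by
    apply one_div_le_one_div_of_le (by norm_num) h2n
  have hth : 17/16 * l * 2^n / (1 - 3/2*l) ≤ 17/52 := by
    rw [div_le_iff₀ h13]
    nlinarith
  linarith

include hn hl0 hl2 in
lemma l_lt_lamp : l < lamp l := by rw [lamp]; linarith

include hn hl0 hl2 in
lemma lamp_le_Lami : lamp l ≤ Lami n l := by
  have hl8 := l_le_eighth hn hl0 hl2
  have hpl := pow_l_bound hn hl0 hl2
  have h2 : (0:ℝ) < 2^n := by positivity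
  rw [lamp, Lami, le_div_iff₀ h2]
  nlinarith

end Params

/-! ### Tree structure lemmas -/

lemma cand_sub_D {Q : Cube n} {R : Cube n} (h : R ∈ cand f l D T Q) : R ∈ D := h.1

lemma childrenOf_sub_cand {Q R : Cube n} (h : R ∈ childrenOf f l D T Q) :
    R ∈ cand f l D T Q := h.1

lemma cand_ne {Q R : Cube n} (h : R ∈ cand f l D T Q) : R ≠ Q := h.2.2.1

lemma cand_desc {Q R : Cube n} (h : R ∈ cand f l D T Q) : R.IsDescendant Q := h.2.1

/-- every candidate is contained in a maximal one. -/
lemma cand_le_max {Q R : Cube n} (h : R ∈ cand f l D T Q) :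
    ∃ M ∈ childrenOf f l D T Q, R.IsDescendant M := by
  obtain ⟨m, hm⟩ := isDescendant_iff.1 (cand_desc h)
  induction m using Nat.strong_induction_on generalizing R with
  | _ m ih =>
    by_cases hmax : ∀ R' ∈ cand f l D T Q, R.IsDescendant R' → R = R'
    · exact ⟨R, ⟨h, hmax⟩, Relation.ReflTransGen.refl⟩
    · push_neg at hmax
      obtain ⟨R', hR', hdesc, hne⟩ := hmax
      obtain ⟨a, ha⟩ := isDescendant_iff.1 hdesc
      obtain ⟨m', hm'⟩ := isDescendant_iff.1 (cand_desc hR')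
      have hcomp := descAt_trans ha hm'
      have haz : a ≠ 0 := by
        intro h0
        rw [h0] at ha
        exact hne (descAt_zero ha)
      have hmm : m = a + m' := descAt_unique hm hcomp
      obtain ⟨M, hM, hMd⟩ := ih m' (by omega) hR' hm'
      exact ⟨M, hM, hdesc.trans hMd⟩

lemma children_eq_of_mem {D' : Set (Cube n)} (hD : IsDyadicLattice D) {Q R₁ R₂ : Cube n}
    (h1 : R₁ ∈ childrenOf f l D T Q) (h2 : R₂ ∈ childrenOf f l D T Q)
    {y : Fin n → ℝ} (hy1 : y ∈ R₁.toSet) (hy2 : y ∈ R₂.toSet) : R₁ = R₂ := by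
  rcases desc_or_desc hD (cand_sub_D h1.1) (cand_sub_D h2.1) hy1 hy2 with hd | hd
  · exact h1.2 R₂ h2.1 hd
  · exact (h2.2 R₁ h1.1 hd).symm

lemma childrenOf_pairwiseDisjoint (hD : IsDyadicLattice D) (Q : Cube n) :
    (childrenOf f l D T Q).PairwiseDisjoint Cube.toSet := by
  intro R₁ h1 R₂ h2 hne
  rw [Function.onFun]
  rw [Set.disjoint_left]
  intro y hy1 hy2
  exact hne (children_eq_of_mem (D' := D) hD h1 h2 hy1 hy2)

lemma interior_toSet_nonempty (Q : Cube n) : (interior Q.toSet).Nonempty := by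
  have hsub : Set.pi Set.univ (fun i => Set.Ioo (Q.corner i) (Q.corner i + Q.side)) ⊆ Q.toSet := by
    rw [toSet_eq_pi]
    exact Set.pi_mono (fun i _ => Set.Ioo_subset_Ico_self)
  have hopen : IsOpen (Set.pi Set.univ (fun i => Set.Ioo (Q.corner i) (Q.corner i + Q.side))) :=
    isOpen_set_pi Set.finite_univ (fun i _ => isOpen_Ioo)
  have hne : (Set.pi Set.univ (fun i => Set.Ioo (Q.corner i) (Q.corner i + Q.side))).Nonempty := by
    refine ⟨fun i => Q.corner i + Q.side/2, fun i _ => ?_⟩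
    have := Q.side_pos
    constructor <;> simp <;> linarith
  obtain ⟨y, hy⟩ := hne
  exact ⟨y, (hopen.subset_interior_iff.2 hsub) hy⟩

lemma childrenOf_countable (hD : IsDyadicLattice D) (Q : Cube n) :
    (childrenOf f l D T Q).Countable :=
  (childrenOf_pairwiseDisjoint hD Q).countable_of_nonempty_interior
    (fun R _ => interior_toSet_nonempty R)

lemma lvl_mem_D_desc {R : Cube n} (hR : R ∈ D) {P : Cube n} {d : ℕ}
    (h : P ∈ lvl f l D T R d) : P ∈ D ∧ P.IsDescendant R := by
  induction d generalizing P with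
  | zero => rw [show P = R from h]; exact ⟨hR, Relation.ReflTransGen.refl⟩
  | succ d ih =>
    obtain ⟨Q, hQ, hP⟩ := h
    obtain ⟨hQD, hQdesc⟩ := ih hQ
    exact ⟨cand_sub_D hP.1, (cand_desc hP.1).trans hQdesc⟩

lemma lvl_topdown {R P : Cube n} {d : ℕ} (h : P ∈ lvl f l D T R (d+1)) :
    ∃ W ∈ childrenOf f l D T R, P ∈ lvl f l D T W d := by
  induction d generalizing P with
  | zero =>
    obtain ⟨Q, hQ, hP⟩ := h
    rw [show Q = R from hQ] at hP
    exact ⟨P, hP, rfl⟩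
  | succ d ih =>
    obtain ⟨Q, hQ, hP⟩ := h
    obtain ⟨W, hW, hQW⟩ := ih hQ
    exact ⟨W, hW, Q, hQW, hP⟩

lemma lvl_compose {R R' P : Cube n} {d' d : ℕ} (h1 : R' ∈ lvl f l D T R d')
    (h2 : P ∈ lvl f l D T R' d) : P ∈ lvl f l D T R (d' + d) := by
  induction d generalizing P with
  | zero => rw [show P = R' from h2]; exact h1
  | succ d ih =>
    obtain ⟨Q, hQ, hP⟩ := h2
    exact ⟨Q, ih hQ, hP⟩

lemma lvl_countable (hD : IsDyadicLattice D) (R : Cube n) (d : ℕ) :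
    (lvl f l D T R d).Countable := by
  induction d with
  | zero => exact Set.countable_singleton R
  | succ d ih =>
    have : lvl f l D T R (d+1) = ⋃ Q ∈ lvl f l D T R d, childrenOf f l D T Q := by
      ext P
      simp only [Set.mem_iUnion, lvl]
      exact ⟨fun ⟨Q, h1, h2⟩ => ⟨Q, h1, h2⟩, fun ⟨Q, h1, h2⟩ => ⟨Q, h1, h2⟩⟩
    rw [this]
    exact Set.Countable.biUnion ih (fun Q _ => childrenOf_countable hD Q)

lemma Sfam_countable (hD : IsDyadicLattice D) : (Sfam f l D T).Countable := by
  have : Sfam f l D T = ⋃ k, ⋃ d, lvl f l D T (T k) d := by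
    ext P
    simp only [Set.mem_iUnion, Sfam, Set.mem_setOf_eq]
  rw [this]
  exact Set.countable_iUnion (fun k => Set.countable_iUnion (fun d => lvl_countable hD _ d))

lemma Sfam_sub_D (hT : ∀ k, T k ∈ D) {P : Cube n} (h : P ∈ Sfam f l D T) : P ∈ D := by
  obtain ⟨k, d, hd⟩ := h
  exact (lvl_mem_D_desc (hT k) hd).1


/-- A strictly smaller tree cube is inside some child. -/
lemma branch_lemma (hn : 0 < n) (hD : IsDyadicLattice D) {R P Q : Cube n} (hR : R ∈ D)
    {dP dQ : ℕ} (hP : P ∈ lvl f l D T R dP) (hQ : Q ∈ lvl f l D T R dQ)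
    (hsub : P.toSet ⊆ Q.toSet) (hne : P ≠ Q) :
    ∃ W ∈ childrenOf f l D T Q, P.toSet ⊆ W.toSet := by
  induction dQ generalizing R dP with
  | zero =>
    have hQR : Q = R := hQ
    subst hQR
    rcases Nat.eq_zero_or_pos dP with h0 | h0
    · rw [h0] at hP; exact absurd (show P = Q from hP) hne
    · obtain ⟨dP', rfl⟩ : ∃ d', dP = d' + 1 := ⟨dP - 1, by omega⟩
      obtain ⟨W, hW, hPW⟩ := lvl_topdown hP
      exact ⟨W, hW, desc_subset (lvl_mem_D_desc (cand_sub_D hW.1) hPW).2⟩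
  | succ dQ ih =>
    obtain ⟨WQ, hWQ, hQW⟩ := lvl_topdown hQ
    by_cases hPR : P = R
    · -- impossible: R ⊆ Q ⊆ WQ ⊊ R
      exfalso
      have h1 : Q.toSet ⊆ WQ.toSet := desc_subset (lvl_mem_D_desc (cand_sub_D hWQ.1) hQW).2
      have h2 : WQ.toSet ⊆ R.toSet := desc_subset (cand_desc hWQ.1)
      have hlt : WQ.side < R.side := side_lt_of_ne_desc (cand_desc hWQ.1) (cand_ne hWQ.1)
      have hmon : volume R.toSet ≤ volume WQ.toSet := by
        apply measure_mono
        rw [hPR] at hsub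
        exact fun y hy => h1 (hsub hy)
      rw [volume_toSet, volume_toSet] at hmon
      have := (ENNReal.ofReal_le_ofReal_iff (pow_pos WQ.side_pos n).le).1 hmon
      have hplt : WQ.side ^ n < R.side ^ n :=
        pow_lt_pow_left₀ hlt WQ.side_pos.le (by omega)
      linarith
    · rcases Nat.eq_zero_or_pos dP with h0 | h0
      · rw [h0] at hP; exact absurd (show P = R from hP) hPR
      obtain ⟨dP', rfl⟩ : ∃ d', dP = d' + 1 := ⟨dP - 1, by omega⟩
      obtain ⟨WP, hWP, hPW⟩ := lvl_topdown hP
      have hWeq : WP = WQ := by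
        obtain ⟨y, hy⟩ := toSet_nonempty P
        have hy1 : y ∈ WP.toSet := desc_subset (lvl_mem_D_desc (cand_sub_D hWP.1) hPW).2 hy
        have hy2 : y ∈ WQ.toSet :=
          desc_subset (lvl_mem_D_desc (cand_sub_D hWQ.1) hQW).2 (hsub hy)
        exact children_eq_of_mem (D' := D) hD hWP hWQ hy1 hy2
      rw [hWeq] at hPW
      exact ih (cand_sub_D hWQ.1) hPW hQW

/-- forced tops belong to every tree they sit inside. -/
lemma top_mem_lvl (hT : ∀ k, T k ∈ D) {Q : Cube n} (hQ : Q ∈ D) {j : ℕ}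
    (hdesc : (T j).IsDescendant Q) : ∃ d, T j ∈ lvl f l D T Q d := by
  obtain ⟨m, hm⟩ := isDescendant_iff.1 hdesc
  induction m using Nat.strong_induction_on generalizing Q with
  | _ m ih =>
    by_cases hne : T j = Q
    · exact ⟨0, by rw [hne]; rfl⟩
    · have hcand : T j ∈ cand f l D T Q := ⟨hT j, hdesc, hne, Or.inr ⟨j, rfl⟩⟩
      obtain ⟨M, hM, hMd⟩ := cand_le_max hcand
      by_cases hMeq : T j = M
      · exact ⟨1, Q, rfl, by rw [hMeq]; exact hM⟩
      · obtain ⟨a, ha⟩ := isDescendant_iff.1 hMd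
        obtain ⟨b, hb⟩ := isDescendant_iff.1 (cand_desc hM.1)
        have haz : a ≠ 0 := fun h0 => hMeq (by rw [h0] at ha; exact descAt_zero ha)
        have hbz : b ≠ 0 := fun h0 => (cand_ne hM.1) (by rw [h0] at hb; exact descAt_zero hb)
        have hmm : m = a + b := descAt_unique hm (descAt_trans ha hb)
        obtain ⟨d, hd⟩ := ih a (by omega) (cand_sub_D hM.1) hMd ha
        exact ⟨1 + d, lvl_compose (R := Q) (R' := M) ⟨Q, rfl, hM⟩ hd⟩

lemma tops_desc_mono (hTd : ∀ k, (T k).IsDescendant (T (k+1))) {j k : ℕ} (h : j ≤ k) :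
    (T j).IsDescendant (T k) := by
  induction k with
  | zero =>
    have : j = 0 := by omega
    rw [this]
    exact Relation.ReflTransGen.refl
  | succ k ih =>
    rcases Nat.eq_or_lt_of_le h with heq | hlt
    · rw [heq]
      exact Relation.ReflTransGen.refl
    · exact (ih (by omega)).trans (hTd k)

/-- Any member of `Sfam` lives in a common tree with any other member. -/
lemma Sfam_common_tree (hT : ∀ k, T k ∈ D) (hTd : ∀ k, (T k).IsDescendant (T (k+1)))
    {P Q : Cube n} (hP : P ∈ Sfam f l D T) (hQ : Q ∈ Sfam f l D T) :
    ∃ m dP dQ, P ∈ lvl f l D T (T m) dP ∧ Q ∈ lvl f l D T (T m) dQ := by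
  obtain ⟨k, d, hd⟩ := hP
  obtain ⟨k', d', hd'⟩ := hQ
  set m := max k k'
  obtain ⟨dk, hdk⟩ := top_mem_lvl (f := f) (l := l) hT (hT m)
    (tops_desc_mono hTd (le_max_left k k'))
  obtain ⟨dk', hdk'⟩ := top_mem_lvl (f := f) (l := l) hT (hT m)
    (tops_desc_mono hTd (le_max_right k k'))
  exact ⟨m, dk + d, dk' + d', lvl_compose hdk hd, lvl_compose hdk' hd'⟩

lemma Edef_subset (Q : Cube n) : Edef f l D T Q ⊆ Q.toSet := Set.diff_subset

lemma Edef_measurable (hD : IsDyadicLattice D) (Q : Cube n) :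
    MeasurableSet (Edef f l D T Q) := by
  apply (measurableSet_toSet Q).diff
  exact MeasurableSet.biUnion (childrenOf_countable hD Q) (fun R _ => measurableSet_toSet R)

/-- disjointness of the sparse sets. -/
lemma Edef_disjoint (hn : 0 < n) (hD : IsDyadicLattice D) (hT : ∀ k, T k ∈ D)
    (hTd : ∀ k, (T k).IsDescendant (T (k+1))) :
    (Sfam f l D T).PairwiseDisjoint (Edef f l D T) := by
  intro P hP Q hQ hne
  rw [Function.onFun, Set.disjoint_left]
  intro y hyP hyQ
  have hyP' : y ∈ P.toSet := Edef_subset P hyP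
  have hyQ' : y ∈ Q.toSet := Edef_subset Q hyQ
  rcases desc_or_desc hD (Sfam_sub_D hT hP) (Sfam_sub_D hT hQ) hyP' hyQ' with hd | hd
  · -- P ⊆ Q
    obtain ⟨m, dP, dQ, h1, h2⟩ := Sfam_common_tree hT hTd hP hQ
    obtain ⟨W, hW, hsub⟩ := branch_lemma hn hD (hT m) h1 h2 (desc_subset hd) hne
    exact hyQ.2 (Set.mem_biUnion hW (hsub hyP'))
  · obtain ⟨m, dP, dQ, h1, h2⟩ := Sfam_common_tree hT hTd hQ hP
    obtain ⟨W, hW, hsub⟩ := branch_lemma hn hD (hT m) h1 h2 (desc_subset hd) (Ne.symm hne)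
    exact hyP.2 (Set.mem_biUnion hW (hsub hyQ'))


/-! ### Measure bounds: sparseness -/

lemma child_small {Q W : Cube n} (hW : W ∈ childrenOf f l D T Q) :
    volume W.toSet ≤ ENNReal.ofReal (1/2^n) * volume Q.toSet := by
  obtain ⟨m, hm⟩ := isDescendant_iff.1 (cand_desc hW.1)
  have hmz : m ≠ 0 := fun h0 => (cand_ne hW.1) (by rw [h0] at hm; exact descAt_zero hm)
  have hside : W.side ≤ Q.side / 2 := by
    rw [descAt_side hm]
    apply div_le_div_of_nonneg_left Q.side_pos.le (by norm_num)
    calc (2:ℝ) = 2^1 := by norm_num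
    _ ≤ 2^m := by apply pow_le_pow_right₀ (by norm_num); omega
  rw [volume_toSet, volume_toSet, ← ENNReal.ofReal_mul (by positivity)]
  apply ENNReal.ofReal_le_ofReal
  have h1 : W.side ^ n ≤ (Q.side/2)^n := pow_le_pow_left₀ W.side_pos.le hside n
  have h2 : (Q.side/2)^n = 1/2^n * Q.side^n := by
    rw [div_pow]; ring
  linarith [h1, h2.le]

lemma bigA_vol (hf : Measurable f) (hl0 : 0 < l) (Q : Cube n) :
    volume (bigA f l Q) ≤ ENNReal.ofReal (lamp l) * volume Q.toSet :=
  nu_measure_le hf (by rw [lamp]; linarith) Q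

lemma bigA_measurable (hf : Measurable f) (Q : Cube n) : MeasurableSet (bigA f l Q) :=
  (measurableSet_abs_gt hf _).inter (measurableSet_toSet Q)

lemma children_union_bound (hf : Measurable f) (hn : 0 < n) (hl0 : 0 < l)
    (hl2 : l ≤ 1/2^(n+2)) (hD : IsDyadicLattice D)
    (hTd : ∀ k, (T k).IsDescendant (T (k+1))) (Q : Cube n) :
    volume (⋃ R ∈ childrenOf f l D T Q, R.toSet) ≤
      ENNReal.ofReal (lamp l / Lami n l + 1/2^n) * volume Q.toSet := by
  classical
  set Ch := childrenOf f l D T Q with hCh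
  set Cm := {R ∈ Ch | ENNReal.ofReal (Lami n l) * volume R.toSet <
    volume (bigA f l Q ∩ R.toSet)} with hCm
  have hsplit : (⋃ R ∈ Ch, R.toSet) ⊆ (⋃ R ∈ Cm, R.toSet) ∪ (⋃ R ∈ Ch \ Cm, R.toSet) := by
    intro y hy
    obtain ⟨R, hR, hyR⟩ := Set.mem_iUnion₂.1 hy
    by_cases h : R ∈ Cm
    · exact Or.inl (Set.mem_biUnion h hyR)
    · exact Or.inr (Set.mem_biUnion ⟨hR, h⟩ hyR)
  have hCmc : Cm.Countable := (childrenOf_countable hD Q).mono (fun R hR => hR.1)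
  have hCmdisj : Cm.PairwiseDisjoint Cube.toSet :=
    (childrenOf_pairwiseDisjoint hD Q).subset (fun R hR => hR.1)
  have hLpos := Lami_pos hn hl0 hl2
  -- bound for the measure-children part
  have hvol1 : volume (⋃ R ∈ Cm, R.toSet) ≤
      ENNReal.ofReal (lamp l / Lami n l) * volume Q.toSet := by
    rw [measure_biUnion hCmc hCmdisj (fun R _ => measurableSet_toSet R)]
    have hstep : ENNReal.ofReal (Lami n l) * ∑' R : Cm, volume (R : Cube n).toSet ≤
        ENNReal.ofReal (lamp l) * volume Q.toSet := by
      rw [← ENNReal.tsum_mul_left]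
      have hterm : ∀ R : Cm, ENNReal.ofReal (Lami n l) * volume (R : Cube n).toSet ≤
          volume (bigA f l Q ∩ (R : Cube n).toSet) := fun R => (R.2.2).le
      refine le_trans (ENNReal.tsum_le_tsum hterm) ?_
      have hdisj2 : Cm.PairwiseDisjoint (fun R => bigA f l Q ∩ R.toSet) := by
        intro R₁ h1 R₂ h2 hne
        exact Disjoint.mono Set.inter_subset_right Set.inter_subset_right
          (hCmdisj h1 h2 hne)
      rw [← measure_biUnion hCmc hdisj2
        (fun R _ => (bigA_measurable hf Q).inter (measurableSet_toSet R))]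
      refine le_trans (measure_mono ?_) (bigA_vol hf hl0 Q)
      exact Set.iUnion₂_subset (fun R _ => Set.inter_subset_left)
    have h1 : ∑' R : Cm, volume (R : Cube n).toSet =
        ENNReal.ofReal (1/(Lami n l)) * (ENNReal.ofReal (Lami n l) *
          ∑' R : Cm, volume (R : Cube n).toSet) := by
      rw [← mul_assoc, ← ENNReal.ofReal_mul (by positivity)]
      rw [one_div, inv_mul_cancel₀ hLpos.ne']
      simp
    rw [h1]
    calc ENNReal.ofReal (1/(Lami n l)) * (ENNReal.ofReal (Lami n l) *
          ∑' R : Cm, volume (R : Cube n).toSet)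
        ≤ ENNReal.ofReal (1/(Lami n l)) * (ENNReal.ofReal (lamp l) * volume Q.toSet) :=
          mul_le_mul_right hstep _
      _ = ENNReal.ofReal (lamp l / Lami n l) * volume Q.toSet := by
          rw [← mul_assoc, ← ENNReal.ofReal_mul (by positivity)]
          congr 2
          field_simp
  -- the top part is a subsingleton
  have htopsub : (Ch \ Cm).Subsingleton := by
    intro R₁ h1 R₂ h2
    have ht1 : ∃ k, R₁ = T k := by
      rcases h1.1.1.2.2.2 with hmeas | ht
      · exact absurd ⟨h1.1, hmeas⟩ h1.2
      · exact ht
    have ht2 : ∃ k, R₂ = T k := by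
      rcases h2.1.1.2.2.2 with hmeas | ht
      · exact absurd ⟨h2.1, hmeas⟩ h2.2
      · exact ht
    obtain ⟨k1, rfl⟩ := ht1
    obtain ⟨k2, rfl⟩ := ht2
    obtain ⟨y, hy⟩ := toSet_nonempty (T k1)
    obtain ⟨y2, hy2⟩ := toSet_nonempty (T k2)
    rcases le_total k1 k2 with hk | hk
    · exact children_eq_of_mem (D' := D) hD h1.1 h2.1 hy
        (desc_subset (tops_desc_mono hTd hk) hy)
    · exact children_eq_of_mem (D' := D) hD h1.1 h2.1
        (desc_subset (tops_desc_mono hTd hk) hy2) hy2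
  have hvol2 : volume (⋃ R ∈ Ch \ Cm, R.toSet) ≤ ENNReal.ofReal (1/2^n) * volume Q.toSet := by
    rcases Set.Subsingleton.eq_empty_or_singleton htopsub with he | ⟨R, hR⟩
    · rw [he]; simp
    · rw [hR]
      simp only [Set.mem_singleton_iff, Set.iUnion_iUnion_eq_left]
      have hRCh : R ∈ Ch := by
        have : R ∈ Ch \ Cm := by rw [hR]; rfl
        exact this.1
      exact child_small hRCh
  calc volume (⋃ R ∈ Ch, R.toSet)
      ≤ volume ((⋃ R ∈ Cm, R.toSet) ∪ (⋃ R ∈ Ch \ Cm, R.toSet)) := measure_mono hsplit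
    _ ≤ volume (⋃ R ∈ Cm, R.toSet) + volume (⋃ R ∈ Ch \ Cm, R.toSet) := measure_union_le _ _
    _ ≤ ENNReal.ofReal (lamp l / Lami n l) * volume Q.toSet +
        ENNReal.ofReal (1/2^n) * volume Q.toSet := add_le_add hvol1 hvol2
    _ = ENNReal.ofReal (lamp l / Lami n l + 1/2^n) * volume Q.toSet := by
        rw [ENNReal.ofReal_add (div_nonneg (by rw [lamp]; linarith) hLpos.le) (by positivity),
          add_mul]


lemma Edef_vol (hf : Measurable f) (hn : 0 < n) (hl0 : 0 < l)
    (hl2 : l ≤ 1/2^(n+2)) (hD : IsDyadicLattice D)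
    (hTd : ∀ k, (T k).IsDescendant (T (k+1))) (Q : Cube n) :
    ENNReal.ofReal (9/52) * volume Q.toSet ≤ volume (Edef f l D T Q) := by
  have hub := children_union_bound hf hn hl0 hl2 hD hTd Q
  have hth := theta_bound hn hl0 hl2
  have hub2 : volume (⋃ R ∈ childrenOf f l D T Q, R.toSet) ≤
      ENNReal.ofReal (43/52) * volume Q.toSet :=
    le_trans hub (mul_le_mul_left (ENNReal.ofReal_le_ofReal hth) _)
  have hsub : (⋃ R ∈ childrenOf f l D T Q, R.toSet) ⊆ Q.toSet :=
    Set.iUnion₂_subset (fun R hR => desc_subset (cand_desc hR.1))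
  have hmeasU : MeasurableSet (⋃ R ∈ childrenOf f l D T Q, R.toSet) :=
    MeasurableSet.biUnion (childrenOf_countable hD Q) (fun R _ => measurableSet_toSet R)
  rw [Edef, measure_diff hsub hmeasU.nullMeasurableSet
    (ne_top_of_le_ne_top (volume_toSet_ne_top Q) (measure_mono hsub))]
  apply ENNReal.le_sub_of_add_le_right (ne_top_of_le_ne_top (volume_toSet_ne_top Q) (measure_mono hsub))
  calc ENNReal.ofReal (9/52) * volume Q.toSet + volume (⋃ R ∈ childrenOf f l D T Q, R.toSet)
      ≤ ENNReal.ofReal (9/52) * volume Q.toSet + ENNReal.ofReal (43/52) * volume Q.toSet :=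
        add_le_add_right hub2 _
    _ = volume Q.toSet := by
        rw [← add_mul, ← ENNReal.ofReal_add (by norm_num) (by norm_num)]
        norm_num

lemma Sfam_carleson (hf : Measurable f) (hn : 0 < n) (hl0 : 0 < l)
    (hl2 : l ≤ 1/2^(n+2)) (hD : IsDyadicLattice D) (hT : ∀ k, T k ∈ D)
    (hTd : ∀ k, (T k).IsDescendant (T (k+1))) :
    IsCarleson 6 D (Sfam f l D T) := by
  intro Q _
  have hcnt : {P : Cube n | P ∈ Sfam f l D T ∧ P.toSet ⊆ Q.toSet}.Countable :=
    (Sfam_countable hD).mono (fun P hP => hP.1)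
  have : Countable {P : Cube n // P ∈ Sfam f l D T ∧ P.toSet ⊆ Q.toSet} :=
    Set.Countable.to_subtype hcnt
  have hdisj : Pairwise (Function.onFun Disjoint
      (fun P : {P : Cube n // P ∈ Sfam f l D T ∧ P.toSet ⊆ Q.toSet} => Edef f l D T P.1)) := by
    intro P₁ P₂ hne
    exact Edef_disjoint hn hD hT hTd P₁.2.1 P₂.2.1 (fun h => hne (Subtype.ext h))
  calc (∑' P : {P : Cube n // P ∈ Sfam f l D T ∧ P.toSet ⊆ Q.toSet}, volume P.1.toSet)
      ≤ ∑' P : {P : Cube n // P ∈ Sfam f l D T ∧ P.toSet ⊆ Q.toSet},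
          ENNReal.ofReal (52/9) * volume (Edef f l D T P.1) := by
        apply ENNReal.tsum_le_tsum
        intro P
        have h1 := Edef_vol hf hn hl0 hl2 hD hTd P.1
        calc volume P.1.toSet
            = ENNReal.ofReal (52/9) * (ENNReal.ofReal (9/52) * volume P.1.toSet) := by
              rw [← mul_assoc, ← ENNReal.ofReal_mul (by norm_num)]
              norm_num
          _ ≤ ENNReal.ofReal (52/9) * volume (Edef f l D T P.1) := mul_le_mul_right h1 _
    _ = ENNReal.ofReal (52/9) * ∑' P : {P : Cube n // P ∈ Sfam f l D T ∧ P.toSet ⊆ Q.toSet},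
          volume (Edef f l D T P.1) := ENNReal.tsum_mul_left
    _ ≤ ENNReal.ofReal (52/9) * volume Q.toSet := by
        apply mul_le_mul_right
        rw [← measure_iUnion hdisj (fun P => Edef_measurable hD P.1)]
        apply measure_mono
        apply Set.iUnion_subset
        intro P
        exact le_trans (Edef_subset P.1) P.2.2
    _ ≤ ENNReal.ofReal 6 * volume Q.toSet := by
        apply mul_le_mul_left
        apply ENNReal.ofReal_le_ofReal
        norm_num


/-! ### The oscillation estimate on a child cube -/

lemma child_A_bound (hf : Measurable f) (hn : 0 < n) (hl0 : 0 < l) (hl2 : l ≤ 1/2^(n+2))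
    (hD : IsDyadicLattice D) {Q W : Cube n} (hQD : Q ∈ D) (hW : W ∈ childrenOf f l D T Q) :
    volume (bigA f l Q ∩ W.toSet) ≤ ENNReal.ofReal (1 - 3/2*l) * volume W.toSet := by
  have hl8 := l_le_eighth hn hl0 hl2
  have hpl := pow_l_bound hn hl0 hl2
  obtain ⟨m, hm⟩ := isDescendant_iff.1 (cand_desc hW.1)
  have hmz : m ≠ 0 := fun h0 => (cand_ne hW.1) (by rw [h0] at hm; exact descAt_zero hm)
  obtain ⟨m', rfl⟩ : ∃ m', m = m' + 1 := ⟨m - 1, by omega⟩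
  obtain ⟨P, hWP, hPQ⟩ := descAt_succ_bot hm
  have hsidePW : P.side = 2 * W.side := by
    rw [hWP.1]; ring
  have hvolPW : volume P.toSet = ENNReal.ofReal (2^n) * volume W.toSet := by
    rw [volume_toSet, volume_toSet, ← ENNReal.ofReal_mul (by positivity), hsidePW,
      mul_pow]
  have hWsubP : W.toSet ⊆ P.toSet := child_subset hWP
  by_cases hPQ' : P = Q
  · -- the parent is Q itself
    rw [hPQ'] at hvolPW
    calc volume (bigA f l Q ∩ W.toSet) ≤ volume (bigA f l Q) := measure_mono Set.inter_subset_left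
      _ ≤ ENNReal.ofReal (lamp l) * volume Q.toSet := bigA_vol hf hl0 Q
      _ = ENNReal.ofReal (lamp l) * (ENNReal.ofReal (2^n) * volume W.toSet) := by rw [hvolPW]
      _ = ENNReal.ofReal (lamp l * 2^n) * volume W.toSet := by
          rw [← mul_assoc, ← ENNReal.ofReal_mul (by rw [lamp]; linarith)]
      _ ≤ ENNReal.ofReal (1 - 3/2*l) * volume W.toSet := by
          apply mul_le_mul_left
          apply ENNReal.ofReal_le_ofReal
          rw [lamp]
          nlinarith
  · -- the parent is not a candidate
    have hPD : P ∈ D := desc_mem_D hD hQD hPQ.toDesc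
    have hPnotc : P ∉ cand f l D T Q := by
      intro hc
      have hWdescP : W.IsDescendant P := isDescendant_iff.2 ⟨1, W, rfl, hWP⟩
      have heq : W = P := hW.2 P hc hWdescP
      have h1 := hWP.1
      rw [heq] at h1
      have := P.side_pos
      linarith
    have hmeas : ¬ (ENNReal.ofReal (Lami n l) * volume P.toSet <
        volume (bigA f l Q ∩ P.toSet)) := by
      intro hc
      exact hPnotc ⟨hPD, hPQ.toDesc, hPQ', Or.inl hc⟩
    push_neg at hmeas
    calc volume (bigA f l Q ∩ W.toSet) ≤ volume (bigA f l Q ∩ P.toSet) :=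
          measure_mono (Set.inter_subset_inter_right _ hWsubP)
      _ ≤ ENNReal.ofReal (Lami n l) * volume P.toSet := hmeas
      _ = ENNReal.ofReal (Lami n l) * (ENNReal.ofReal (2^n) * volume W.toSet) := by rw [hvolPW]
      _ = ENNReal.ofReal (Lami n l * 2^n) * volume W.toSet := by
          rw [← mul_assoc, ← ENNReal.ofReal_mul (Lami_pos hn hl0 hl2).le]
      _ = ENNReal.ofReal (1 - 3/2*l) * volume W.toSet := by
          congr 1
          rw [Lami]
          congr 1
          exact div_mul_cancel₀ (1 - 3/2*l) (by positivity : ((2:ℝ)^n) ≠ 0)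

lemma osc_link (hf : Measurable f) (hn : 0 < n) (hl0 : 0 < l) (hl2 : l ≤ 1/2^(n+2))
    (hD : IsDyadicLattice D) {Q W : Cube n} (hQD : Q ∈ D) (hW : W ∈ childrenOf f l D T Q) :
    ENNReal.ofReal (nu f (lamp l) W - nu f (lamp l) Q) ≤ oscLambda l f W.toSet := by
  have hl8 := l_le_eighth hn hl0 hl2
  have hlamp0 := lamp_pos hl0 hl2
  have hlamp1 := lamp_lt_one hn hl0 hl2
  apply ofReal_le_of_forall_sub
  intro ε hε
  rcases le_or_gt (nu f (lamp l) W - nu f (lamp l) Q - ε) 0 with hneg | hpos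
  · rw [ENNReal.ofReal_of_nonpos hneg]
    exact zero_le
  refine le_iInf₂ (fun E hE => ?_)
  obtain ⟨hEsub, hEmeas, hEvol⟩ := hE
  -- the set of large values
  have hB1 : ENNReal.ofReal l * volume W.toSet <
      volume (({y | nu f (lamp l) W - ε/2 < |f y|} ∩ W.toSet)) := by
    refine lt_of_le_of_lt ?_ (nu_measure_gt hf hlamp0 hlamp1 W (by linarith))
    apply mul_le_mul_left
    exact ENNReal.ofReal_le_ofReal (by rw [lamp]; linarith)
  obtain ⟨y₁, hy₁B, hy₁E⟩ := meets_of_measure hl0 (by linarith) hEsub hEmeas hEvol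
    Set.inter_subset_right hB1
  -- the set of small values
  set s := nu f (lamp l) Q + ε/2 with hs
  have hB2 : ENNReal.ofReal l * volume W.toSet <
      volume ({y | |f y| ≤ s} ∩ W.toSet) := by
    by_contra hcon
    push_neg at hcon
    have hcover : W.toSet ⊆ ({y | |f y| ≤ s} ∩ W.toSet) ∪ (bigA f l Q ∩ W.toSet) := by
      intro y hy
      by_cases hvy : s < |f y|
      · refine Or.inr ⟨⟨?_, desc_subset (cand_desc hW.1) hy⟩, hy⟩
        have h0 : nu f (lamp l) Q < s := by rw [hs]; linarith
        exact lt_trans h0 hvy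
      · exact Or.inl ⟨not_lt.1 hvy, hy⟩
    have hbound : volume W.toSet ≤ ENNReal.ofReal l * volume W.toSet +
        ENNReal.ofReal (1 - 3/2*l) * volume W.toSet :=
      le_trans (measure_mono hcover) (le_trans (measure_union_le _ _)
        (add_le_add hcon (child_A_bound hf hn hl0 hl2 hD hQD hW)))
    rw [← add_mul, ← ENNReal.ofReal_add (by linarith) (by linarith)] at hbound
    have hlt : ENNReal.ofReal (l + (1 - 3/2*l)) * volume W.toSet < volume W.toSet := by
      have h1 : ENNReal.ofReal (l + (1 - 3/2*l)) < 1 := ENNReal.ofReal_lt_one.2 (by linarith)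
      calc ENNReal.ofReal (l + (1 - 3/2*l)) * volume W.toSet
          < 1 * volume W.toSet := by
            apply (ENNReal.mul_lt_mul_iff_left (volume_toSet_pos W).ne'
              (volume_toSet_ne_top W)).2 h1
        _ = volume W.toSet := one_mul _
    exact absurd hbound (not_le.2 hlt)
  obtain ⟨y₂, hy₂B, hy₂E⟩ := meets_of_measure hl0 (by linarith) hEsub hEmeas hEvol
    Set.inter_subset_right hB2
  have hv1 : nu f (lamp l) W - ε/2 < |f y₁| := hy₁B.1
  have hv2 : |f y₂| ≤ s := hy₂B.1
  refine le_trans (ENNReal.ofReal_le_ofReal ?_) (le_osc_pair hy₁E hy₂E)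
  rw [hs] at hv2
  linarith


lemma ofReal_le_of_rat {t : ℝ} {x : ℝ≥0∞}
    (h : ∀ q : ℚ, 0 < q → (q:ℝ) < t → ENNReal.ofReal q ≤ x) : ENNReal.ofReal t ≤ x := by
  rcases le_or_gt t 0 with ht | ht
  · rw [ENNReal.ofReal_of_nonpos ht]; exact zero_le
  apply ofReal_le_of_forall_sub
  intro ε hε
  rcases le_or_gt (t - ε) 0 with h0 | h0
  · rw [ENNReal.ofReal_of_nonpos h0]; exact zero_le
  obtain ⟨q, hq1, hq2⟩ := exists_rat_btwn (show t - ε < t by linarith)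
  have hq0 : (0:ℚ) < q := by
    have : (0:ℝ) < (q:ℚ) := lt_trans h0 hq1
    exact_mod_cast this
  exact le_trans (ENNReal.ofReal_le_ofReal hq1.le) (h q hq0 hq2)

lemma childrenOf_side_half {Q W : Cube n} (hW : W ∈ childrenOf f l D T Q) :
    W.side ≤ Q.side / 2 := by
  obtain ⟨m, hm⟩ := isDescendant_iff.1 (cand_desc hW.1)
  have hmz : m ≠ 0 := fun h0 => (cand_ne hW.1) (by rw [h0] at hm; exact descAt_zero hm)
  rw [descAt_side hm]
  apply div_le_div_of_nonneg_left Q.side_pos.le (by norm_num)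
  calc (2:ℝ) = 2^1 := by norm_num
  _ ≤ 2^m := by apply pow_le_pow_right₀ (by norm_num); omega

lemma pointwise_bound (hf : Measurable f) (hn : 0 < n) (hl0 : 0 < l) (hl2 : l ≤ 1/2^(n+2))
    (hD : IsDyadicLattice D) (hT : ∀ k, T k ∈ D) :
    ∀ᵐ x : Fin n → ℝ, ∀ k : ℕ, x ∈ (T k).toSet →
      ENNReal.ofReal |f x| ≤ ENNReal.ofReal (nu f (lamp l) (T k)) +
        ∑' Q : (Sfam f l D T), Q.1.toSet.indicator (fun _ => oscLambda l f Q.1.toSet) x := by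
  have hlamp0 := lamp_pos hl0 hl2
  have hlamp1 := lamp_lt_one hn hl0 hl2
  have hLami1 := Lami_lt_one hn hl0 hl2
  have hLami0 := Lami_pos hn hl0 hl2
  have hG1 : ∀ᵐ x : Fin n → ℝ, ∀ q : ℚ, x ∈ {y : Fin n → ℝ | (q:ℝ) < |f y|} →
      ∀ Qs : ℕ → Cube n, (∀ j, x ∈ (Qs j).toSet) →
      Filter.Tendsto (fun j => (Qs j).side) Filter.atTop (nhds 0) →
      ∀ᶠ j in Filter.atTop, ENNReal.ofReal (lamp l) * volume (Qs j).toSet <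
        volume ({y : Fin n → ℝ | (q:ℝ) < |f y|} ∩ (Qs j).toSet) := by
    rw [ae_all_iff]
    intro q
    exact ae_cube_density (measurableSet_abs_gt hf _) hlamp0.le hlamp1
  have hG2 : ∀ᵐ x : Fin n → ℝ, ∀ P : Cube n, P ∈ Sfam f l D T → x ∈ bigA f l P →
      ∀ Qs : ℕ → Cube n, (∀ j, x ∈ (Qs j).toSet) →
      Filter.Tendsto (fun j => (Qs j).side) Filter.atTop (nhds 0) →
      ∀ᶠ j in Filter.atTop, ENNReal.ofReal (Lami n l) * volume (Qs j).toSet <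
        volume (bigA f l P ∩ (Qs j).toSet) := by
    rw [ae_ball_iff (Sfam_countable hD)]
    intro P _
    exact ae_cube_density (bigA_measurable hf P) hLami0.le hLami1
  filter_upwards [hG1, hG2] with x hx1 hx2
  intro k hxT
  classical
  -- the chain of stopping cubes through x
  set step : Cube n → Cube n := fun Q =>
    if h : ∃ W, W ∈ childrenOf f l D T Q ∧ x ∈ W.toSet then h.choose else Q with hstepdef
  set cs : ℕ → Cube n := fun j => step^[j] (T k) with hcs
  have hcs0 : cs 0 = T k := rfl
  have hcssucc : ∀ j, cs (j+1) = step (cs j) := by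
    intro j
    rw [hcs]
    exact Function.iterate_succ_apply' step j (T k)
  have hstep_pos : ∀ Q, (∃ W, W ∈ childrenOf f l D T Q ∧ x ∈ W.toSet) →
      step Q ∈ childrenOf f l D T Q ∧ x ∈ (step Q).toSet := by
    intro Q h
    rw [hstepdef]
    simp only [dif_pos h]
    exact h.choose_spec
  have hstep_neg : ∀ Q, ¬(∃ W, W ∈ childrenOf f l D T Q ∧ x ∈ W.toSet) → step Q = Q := by
    intro Q h
    rw [hstepdef]
    simp only [dif_neg h]
  have hInv : ∀ j, (∃ d, cs j ∈ lvl f l D T (T k) d) ∧ x ∈ (cs j).toSet := by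
    intro j
    induction j with
    | zero => exact ⟨⟨0, rfl⟩, hxT⟩
    | succ j ih =>
      rw [hcssucc]
      by_cases h : ∃ W, W ∈ childrenOf f l D T (cs j) ∧ x ∈ W.toSet
      · obtain ⟨hmem, hxmem⟩ := hstep_pos (cs j) h
        obtain ⟨⟨d, hd⟩, _⟩ := ih
        exact ⟨⟨d+1, cs j, hd, hmem⟩, hxmem⟩
      · rw [hstep_neg (cs j) h]
        exact ih
  have hmemS : ∀ j, cs j ∈ Sfam f l D T := by
    intro j
    obtain ⟨⟨d, hd⟩, _⟩ := hInv j
    exact ⟨k, d, hd⟩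
  have hmemD : ∀ j, cs j ∈ D := fun j => Sfam_sub_D hT (hmemS j)
  have hsidemono : ∀ j, (cs (j+1)).side ≤ (cs j).side := by
    intro j
    rw [hcssucc]
    by_cases h : ∃ W, W ∈ childrenOf f l D T (cs j) ∧ x ∈ W.toSet
    · have h1 := childrenOf_side_half (hstep_pos (cs j) h).1
      have := (cs j).side_pos
      linarith
    · rw [hstep_neg (cs j) h]
  have hsidemono' : ∀ a b, a ≤ b → (cs b).side ≤ (cs a).side := by
    intro a b hab
    induction b with
    | zero => have : a = 0 := by omega
              rw [this]
    | succ b ih =>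
      rcases Nat.eq_or_lt_of_le hab with heq | hlt
      · rw [heq]
      · exact le_trans (hsidemono b) (ih (by omega))
  -- partial sums of the nu increments
  have hpartial : ∀ J, ENNReal.ofReal (nu f (lamp l) (cs J)) ≤
      ENNReal.ofReal (nu f (lamp l) (T k)) +
      ∑ j ∈ Finset.range J, ENNReal.ofReal (nu f (lamp l) (cs (j+1)) - nu f (lamp l) (cs j)) := by
    intro J
    induction J with
    | zero => rw [hcs0]; simp
    | succ J ih =>
      have h1 : nu f (lamp l) (cs (J+1)) =
          nu f (lamp l) (cs J) + (nu f (lamp l) (cs (J+1)) - nu f (lamp l) (cs J)) := by ring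
      calc ENNReal.ofReal (nu f (lamp l) (cs (J+1)))
          ≤ ENNReal.ofReal (nu f (lamp l) (cs J)) +
            ENNReal.ofReal (nu f (lamp l) (cs (J+1)) - nu f (lamp l) (cs J)) := by
            have h2 : ENNReal.ofReal (nu f (lamp l) (cs J) +
                (nu f (lamp l) (cs (J+1)) - nu f (lamp l) (cs J))) ≤
                ENNReal.ofReal (nu f (lamp l) (cs J)) +
                ENNReal.ofReal (nu f (lamp l) (cs (J+1)) - nu f (lamp l) (cs J)) :=
              ENNReal.ofReal_add_le
            rw [← h1] at h2
            exact h2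
        _ ≤ (ENNReal.ofReal (nu f (lamp l) (T k)) +
            ∑ j ∈ Finset.range J, ENNReal.ofReal (nu f (lamp l) (cs (j+1)) - nu f (lamp l) (cs j)))
            + ENNReal.ofReal (nu f (lamp l) (cs (J+1)) - nu f (lamp l) (cs J)) :=
            add_le_add_left ih _
        _ = _ := by rw [Finset.sum_range_succ, add_assoc]
  -- bounding the increments by the oscillation sum
  set tail : ℝ≥0∞ := ∑' Q : (Sfam f l D T), Q.1.toSet.indicator
    (fun _ => oscLambda l f Q.1.toSet) x with htaildef
  have htail : ∀ J, ∑ j ∈ Finset.range J,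
      ENNReal.ofReal (nu f (lamp l) (cs (j+1)) - nu f (lamp l) (cs j)) ≤ tail := by
    intro J
    set g : (Sfam f l D T) → ℝ≥0∞ := fun Q => Q.1.toSet.indicator
      (fun _ => oscLambda l f Q.1.toSet) x with hg
    set t : ℕ → ℝ≥0∞ := fun j =>
      ENNReal.ofReal (nu f (lamp l) (cs (j+1)) - nu f (lamp l) (cs j)) with ht
    set Fs : Finset ℕ := (Finset.range J).filter
      (fun j => ∃ W, W ∈ childrenOf f l D T (cs j) ∧ x ∈ W.toSet) with hFs
    have hzero : ∀ j ∈ Finset.range J, j ∉ Fs → t j = 0 := by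
      intro j hj hnotin
      have hnot : ¬ ∃ W, W ∈ childrenOf f l D T (cs j) ∧ x ∈ W.toSet := by
        intro h
        exact hnotin (Finset.mem_filter.2 ⟨hj, h⟩)
      rw [ht]
      simp only
      rw [hcssucc, hstep_neg (cs j) hnot, sub_self, ENNReal.ofReal_zero]
    have hsum1 : ∑ j ∈ Finset.range J, t j = ∑ j ∈ Fs, t j := by
      rw [hFs]
      exact (Finset.sum_filter_of_ne (fun j hj hne => by
        by_contra hcon
        exact hne (absurd (hzero j hj (by
          intro hmem
          exact hcon ((Finset.mem_filter.1 hmem).2))) hne))).symm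
    set φ : ℕ → (Sfam f l D T) := fun j => ⟨cs (j+1), hmemS (j+1)⟩ with hφ
    have hterm : ∀ j ∈ Fs, t j ≤ g (φ j) := by
      intro j hj
      obtain ⟨hjr, hstepj⟩ := Finset.mem_filter.1 hj
      have hchild := (hstep_pos (cs j) hstepj).1
      rw [← hcssucc] at hchild
      have hosc := osc_link hf hn hl0 hl2 hD (hmemD j) hchild
      rw [hg, hφ]
      simp only
      rw [Set.indicator_of_mem (hInv (j+1)).2]
      exact le_trans (le_refl _) hosc
    have hinj : Set.InjOn φ Fs := by
      intro a ha b hb hab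
      by_contra hne
      rcases Ne.lt_or_gt hne with hlt | hlt
      all_goals {
        first
        | (have hstepb := (Finset.mem_filter.1 hb).2
           have h1 : (cs (b+1)).side ≤ (cs b).side / 2 := by
             rw [hcssucc]
             exact childrenOf_side_half (hstep_pos (cs b) hstepb).1
           have h2 : (cs b).side ≤ (cs (a+1)).side := hsidemono' _ _ (by omega)
           have heq : cs (a+1) = cs (b+1) := congrArg Subtype.val hab
           have h3 := (cs b).side_pos
           rw [heq] at h2
           linarith)
        | (have hstepb := (Finset.mem_filter.1 ha).2
           have h1 : (cs (a+1)).side ≤ (cs a).side / 2 := by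
             rw [hcssucc]
             exact childrenOf_side_half (hstep_pos (cs a) hstepb).1
           have h2 : (cs a).side ≤ (cs (b+1)).side := hsidemono' _ _ (by omega)
           have heq : cs (a+1) = cs (b+1) := congrArg Subtype.val hab
           have h3 := (cs a).side_pos
           rw [← heq] at h2
           linarith)
      }
    calc ∑ j ∈ Finset.range J, t j = ∑ j ∈ Fs, t j := hsum1
      _ ≤ ∑ j ∈ Fs, g (φ j) := Finset.sum_le_sum hterm
      _ = ∑ Q ∈ Fs.image φ, g Q := (Finset.sum_image (fun a ha b hb => hinj ha hb)).symm
      _ ≤ tail := by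
          rw [htaildef, hg]
          exact ENNReal.sum_le_tsum _
  -- main case split
  by_cases hstop : ∃ J, ¬ ∃ W, W ∈ childrenOf f l D T (cs J) ∧ x ∈ W.toSet
  · obtain ⟨J, hJ⟩ := hstop
    have hfx : |f x| ≤ nu f (lamp l) (cs J) := by
      by_contra hcon
      push_neg at hcon
      have hxA : x ∈ bigA f l (cs J) := ⟨hcon, (hInv J).2⟩
      set Rs : ℕ → Cube n := fun m => (exists_descAt_mem (hInv J).2 m).choose with hRs
      have hRsp : ∀ m, DescAt m (Rs m) (cs J) ∧ x ∈ (Rs m).toSet :=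
        fun m => (exists_descAt_mem (hInv J).2 m).choose_spec
      have hRside : ∀ m, (Rs m).side = (cs J).side * (1/2)^m := by
        intro m
        rw [descAt_side (hRsp m).1]
        rw [div_eq_mul_inv, one_div, inv_pow]
      have hRtend : Filter.Tendsto (fun m => (Rs m).side) Filter.atTop (nhds 0) := by
        simp only [hRside]
        have h1 : Filter.Tendsto (fun m : ℕ => ((1:ℝ)/2)^m) Filter.atTop (nhds 0) := by
          apply tendsto_pow_atTop_nhds_zero_of_lt_one (by norm_num) (by norm_num)
        have := h1.const_mul ((cs J).side)
        simpa using this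
      have hev := hx2 (cs J) (hmemS J) hxA Rs (fun m => (hRsp m).2) hRtend
      obtain ⟨m, hm1, hm2⟩ := (hev.and (Filter.eventually_ge_atTop 1)).exists
      have hRcand : Rs m ∈ cand f l D T (cs J) := by
        refine ⟨desc_mem_D hD (hmemD J) (hRsp m).1.toDesc, (hRsp m).1.toDesc, ?_, Or.inl hm1⟩
        intro heq
        have h1 := hRside m
        rw [heq] at h1
        have h2 : ((1:ℝ)/2)^m < 1 := by
          apply pow_lt_one₀ (by norm_num) (by norm_num)
          omega
        have h3 := (cs J).side_pos
        nlinarith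
      obtain ⟨M, hM, hMd⟩ := cand_le_max hRcand
      exact hJ ⟨M, hM, desc_subset hMd (hRsp m).2⟩
    calc ENNReal.ofReal |f x| ≤ ENNReal.ofReal (nu f (lamp l) (cs J)) :=
          ENNReal.ofReal_le_ofReal hfx
      _ ≤ ENNReal.ofReal (nu f (lamp l) (T k)) + ∑ j ∈ Finset.range J,
          ENNReal.ofReal (nu f (lamp l) (cs (j+1)) - nu f (lamp l) (cs j)) := hpartial J
      _ ≤ ENNReal.ofReal (nu f (lamp l) (T k)) + tail := add_le_add_right (htail J) _
  · push_neg at hstop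
    -- the chain never stops; sides tend to zero
    have hsides : ∀ j, (cs j).side ≤ (T k).side * (1/2)^j := by
      intro j
      induction j with
      | zero => rw [hcs0]; simp
      | succ j ih =>
        have h1 : (cs (j+1)).side ≤ (cs j).side / 2 := by
          rw [hcssucc]
          exact childrenOf_side_half (hstep_pos (cs j) (hstop j)).1
        have h2 : ((1:ℝ)/2)^(j+1) = (1/2)^j / 2 := by ring
        rw [h2]
        linarith
    have htends : Filter.Tendsto (fun j => (cs j).side) Filter.atTop (nhds 0) := by
      apply squeeze_zero (fun j => (cs j).side_pos.le) hsides
      have h1 : Filter.Tendsto (fun m : ℕ => ((1:ℝ)/2)^m) Filter.atTop (nhds 0) :=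
        tendsto_pow_atTop_nhds_zero_of_lt_one (by norm_num) (by norm_num)
      have := h1.const_mul ((T k).side)
      simpa using this
    apply ofReal_le_of_rat
    intro q hq0 hqlt
    have hxq : x ∈ {y : Fin n → ℝ | (q:ℝ) < |f y|} := hqlt
    obtain ⟨J, hJ⟩ := (hx1 q hxq cs (fun j => (hInv j).2) htends).exists
    have hnuq : (q:ℝ) ≤ nu f (lamp l) (cs J) := by
      apply le_csInf (nuSet_nonempty hf hlamp0 _)
      intro t ht
      by_contra hcon
      push_neg at hcon
      have hsub : {y : Fin n → ℝ | (q:ℝ) < |f y|} ∩ (cs J).toSet ⊆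
          {y : Fin n → ℝ | t < |f y|} ∩ (cs J).toSet := by
        refine Set.inter_subset_inter_left _ (fun y hy => ?_)
        have hy' : (q:ℝ) < |f y| := hy
        exact lt_trans hcon hy'
      exact absurd ht.2 (not_le.2 (lt_of_lt_of_le hJ (measure_mono hsub)))
    calc ENNReal.ofReal q ≤ ENNReal.ofReal (nu f (lamp l) (cs J)) :=
          ENNReal.ofReal_le_ofReal hnuq
      _ ≤ ENNReal.ofReal (nu f (lamp l) (T k)) + ∑ j ∈ Finset.range J,
          ENNReal.ofReal (nu f (lamp l) (cs (j+1)) - nu f (lamp l) (cs j)) := hpartial J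
      _ ≤ ENNReal.ofReal (nu f (lamp l) (T k)) + tail := add_le_add_right (htail J) _


/-! ### Construction of the increasing sequence of top cubes -/

lemma exists_tops (hD : IsDyadicLattice D) :
    ∃ T : ℕ → Cube n, (∀ k, T k ∈ D) ∧ (∀ k, (T k).IsDescendant (T (k+1))) ∧
      (∀ k : ℕ, Metric.closedBall (0 : Fin n → ℝ) (k:ℝ) ⊆ (T k).toSet) := by
  obtain ⟨Q0, hQ0D, hQ0⟩ := hD.2.2 (Metric.closedBall (0 : Fin n → ℝ) ((0:ℕ):ℝ))
    (isCompact_closedBall _ _)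
  have hstep : ∀ (Q : Cube n), Q ∈ D → ∀ r : ℝ,
      ∃ P, P ∈ D ∧ Q.IsDescendant P ∧ Metric.closedBall (0 : Fin n → ℝ) r ⊆ P.toSet := by
    intro Q hQ r
    obtain ⟨Q', hQ', hsub⟩ := hD.2.2 (Metric.closedBall (0 : Fin n → ℝ) r)
      (isCompact_closedBall _ _)
    obtain ⟨P, hP, h1, h2⟩ := hD.2.1 Q hQ Q' hQ'
    exact ⟨P, hP, h1, hsub.trans (desc_subset h2)⟩
  set G : ℕ → {Q : Cube n // Q ∈ D} := fun k => Nat.rec ⟨Q0, hQ0D⟩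
    (fun k prev => ⟨(hstep prev.1 prev.2 (((k+1 : ℕ)):ℝ)).choose,
      (hstep prev.1 prev.2 (((k+1 : ℕ)):ℝ)).choose_spec.1⟩) k with hG
  refine ⟨fun k => (G k).1, fun k => (G k).2, fun k => ?_, fun k : ℕ => ?_⟩
  · exact (hstep (G k).1 (G k).2 (((k+1 : ℕ)):ℝ)).choose_spec.2.1
  · cases k with
    | zero => exact hQ0
    | succ k => exact (hstep (G k).1 (G k).2 (((k+1 : ℕ)):ℝ)).choose_spec.2.2

/-! ### Decay of the quantiles on the top cubes -/

lemma nu_tops_tendsto (hf : Measurable f) (hn : 0 < n) (hl0 : 0 < l) (hl2 : l ≤ 1/2^(n+2))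
    (hdecay : ∀ ε > (0 : ℝ), Filter.Tendsto
      (fun R : ℝ => volume {x : Fin n → ℝ | (∀ i, |x i| ≤ R) ∧ ε < |f x|} /
        ENNReal.ofReal (R ^ n)) Filter.atTop (nhds 0))
    (hTball : ∀ k : ℕ, Metric.closedBall (0 : Fin n → ℝ) (k:ℝ) ⊆ (T k).toSet) :
    Filter.Tendsto (fun k => nu f (lamp l) (T k)) Filter.atTop (nhds 0) := by
  have hlamp0 := lamp_pos hl0 hl2
  have i0 : Fin n := ⟨0, hn⟩
  -- the sides grow at least linearly
  have hside_big : ∀ k : ℕ, 2*(k:ℝ) < (T k).side := by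
    intro k
    have hk0 : (0:ℝ) ≤ (k:ℝ) := Nat.cast_nonneg k
    have ha : (fun _ => (k:ℝ)) ∈ (T k).toSet := by
      apply hTball
      rw [Metric.mem_closedBall, dist_pi_le_iff hk0]
      intro i
      rw [Real.dist_eq]
      simp [abs_of_nonneg hk0]
    have hb : (fun _ => -(k:ℝ)) ∈ (T k).toSet := by
      apply hTball
      rw [Metric.mem_closedBall, dist_pi_le_iff hk0]
      intro i
      rw [Real.dist_eq]
      simp [abs_of_nonneg hk0]
    have h1 := (ha i0).2
    have h2 := (hb i0).1
    simp only at h1 h2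
    linarith
  have hsubbox : ∀ k : ℕ, (T k).toSet ⊆ {x : Fin n → ℝ | ∀ i, |x i| ≤ (T k).side} := by
    intro k y hy i
    have hk0 : (0:ℝ) ≤ (k:ℝ) := Nat.cast_nonneg k
    have hb : (fun _ => -(k:ℝ)) ∈ (T k).toSet := by
      apply hTball
      rw [Metric.mem_closedBall, dist_pi_le_iff hk0]
      intro i
      rw [Real.dist_eq]
      simp [abs_of_nonneg hk0]
    have ha : (fun _ => (k:ℝ)) ∈ (T k).toSet := by
      apply hTball
      rw [Metric.mem_closedBall, dist_pi_le_iff hk0]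
      intro i
      rw [Real.dist_eq]
      simp [abs_of_nonneg hk0]
    have hc1 : (T k).corner i ≤ -(k:ℝ) := (hb i).1
    have hc2 : (k:ℝ) < (T k).corner i + (T k).side := (ha i).2
    have hy1 := (hy i).1
    have hy2 := (hy i).2
    rw [abs_le]
    constructor <;> nlinarith
  have hsides : Filter.Tendsto (fun k : ℕ => (T k).side) Filter.atTop Filter.atTop := by
    apply Filter.tendsto_atTop_mono (fun k => (hside_big k).le)
    have h1 : Filter.Tendsto (fun k : ℕ => (k:ℝ)) Filter.atTop Filter.atTop :=
      tendsto_natCast_atTop_atTop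
    exact h1.const_mul_atTop (by norm_num)
  -- main estimate
  have hkey : ∀ ε : ℝ, 0 < ε → ∀ᶠ k in Filter.atTop, nu f (lamp l) (T k) ≤ ε := by
    intro ε hε
    have hcomp := (hdecay ε hε).comp hsides
    have hev := hcomp.eventually_lt_const (ENNReal.ofReal_pos.2 hlamp0)
    filter_upwards [hev] with k hk
    apply csInf_le (nuSet_bddBelow _ _)
    refine ⟨hε.le, ?_⟩
    have hsk : (0:ℝ) < (T k).side := (T k).side_pos
    have hnum : volume {x : Fin n → ℝ | (∀ i, |x i| ≤ (T k).side) ∧ ε < |f x|} <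
        ENNReal.ofReal (lamp l) * ENNReal.ofReal ((T k).side ^ n) := by
      have hne0 : ENNReal.ofReal ((T k).side ^ n) ≠ 0 :=
        (ENNReal.ofReal_pos.2 (by positivity)).ne'
      have hnetop : ENNReal.ofReal ((T k).side ^ n) ≠ ⊤ := ENNReal.ofReal_ne_top
      rw [← ENNReal.div_lt_iff (Or.inl hne0) (Or.inl hnetop)]
      exact hk
    refine le_trans (measure_mono ?_) (le_trans hnum.le (by rw [volume_toSet])) 
    rintro y ⟨hy1, hy2⟩
    exact ⟨fun i => hsubbox k hy2 i, hy1⟩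
  rw [tendsto_order]
  constructor
  · intro a ha
    exact Filter.Eventually.of_forall (fun k => lt_of_lt_of_le ha (nu_nonneg _ _))
  · intro a ha
    filter_upwards [hkey (a/2) (by linarith)] with k hk
    linarith

end OD

theorem oscillation_domination {n : ℕ} (f : (Fin n → ℝ) → ℝ) (hf : Measurable f)
    (hdecay : ∀ ε > (0 : ℝ), Filter.Tendsto
      (fun R : ℝ => volume {x : Fin n → ℝ | (∀ i, |x i| ≤ R) ∧ ε < |f x|} /
        ENNReal.ofReal (R ^ n)) Filter.atTop (nhds 0))
    (D : Set (Cube n)) (hD : IsDyadicLattice D)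
    (l : ℝ) (hl : l ∈ Set.Ioc (0 : ℝ) (1 / 2 ^ (n + 2))) :
    ∃ S ⊆ D, (∀ K : Set (Fin n → ℝ), IsCompact K → ∃ Q ∈ S, K ⊆ Q.toSet) ∧
      IsCarleson 6 D S ∧
      ∀ᵐ x : Fin n → ℝ, ENNReal.ofReal |f x| ≤
        ∑' Q : S, Q.1.toSet.indicator (fun _ => oscLambda l f Q.1.toSet) x := by
  obtain ⟨hl0, hl2⟩ := hl
  rcases Nat.eq_zero_or_pos n with hn0 | hn
  · -- dimension 0: f vanishes a.e.
    subst hn0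
    obtain ⟨Q₀, hQ₀D, _⟩ := hD.2.2 ∅ isCompact_empty
    have htoSet : ∀ Q : Cube 0, Q.toSet = Set.univ := by
      intro Q
      rw [Set.eq_univ_iff_forall]
      intro y i
      exact absurd i.2 (by omega)
    have hzero : ∀ ε : ℝ, 0 < ε → volume {x : Fin 0 → ℝ | ε < |f x|} = 0 := by
      intro ε hε
      have h1 := hdecay ε hε
      have h2 : Filter.Tendsto (fun _ : ℝ => volume {x : Fin 0 → ℝ | ε < |f x|})
          Filter.atTop (nhds 0) := by
        apply h1.congr
        intro R
        have hset : {x : Fin 0 → ℝ | (∀ i, |x i| ≤ R) ∧ ε < |f x|} =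
            {x : Fin 0 → ℝ | ε < |f x|} := by
          ext x
          exact ⟨fun h => h.2, fun h => ⟨fun i => i.elim0, h⟩⟩
        rw [hset, pow_zero, ENNReal.ofReal_one, div_one]
      exact tendsto_nhds_unique tendsto_const_nhds h2
    have haezero : ∀ᵐ x : Fin 0 → ℝ, |f x| ≤ 0 := by
      rw [MeasureTheory.ae_iff]
      have hsub : {x : Fin 0 → ℝ | ¬ |f x| ≤ 0} ⊆
          ⋃ m : ℕ, {x : Fin 0 → ℝ | 1/((m:ℝ)+1) < |f x|} := by
        intro x hx
        simp only [Set.mem_setOf_eq, not_le] at hx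
        obtain ⟨m, hm⟩ := exists_nat_one_div_lt hx
        exact Set.mem_iUnion.2 ⟨m, by push_cast at hm ⊢; exact hm⟩
      refine measure_mono_null hsub (measure_iUnion_null (fun m => hzero _ (by positivity)))
    refine ⟨{Q₀}, by simp [hQ₀D], fun K _ => ⟨Q₀, rfl, by rw [htoSet]; exact Set.subset_univ K⟩,
      ?_, ?_⟩
    · intro Q hQ
      have hss : Subsingleton {P : Cube 0 // P ∈ ({Q₀} : Set (Cube 0)) ∧ P.toSet ⊆ Q.toSet} := by
        constructor
        intro a b
        apply Subtype.ext
        rw [show a.1 = Q₀ from a.2.1, show b.1 = Q₀ from b.2.1]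
      rcases isEmpty_or_nonempty {P : Cube 0 // P ∈ ({Q₀} : Set (Cube 0)) ∧ P.toSet ⊆ Q.toSet}
        with he | hne
      · rw [tsum_empty]
        exact zero_le
      · have hu : Unique {P : Cube 0 // P ∈ ({Q₀} : Set (Cube 0)) ∧ P.toSet ⊆ Q.toSet} :=
          uniqueOfSubsingleton hne.some
        rw [tsum_eq_single (hu.default) (fun b hb => absurd (Subsingleton.elim b hu.default) hb)]
        rw [htoSet, ← htoSet Q]
        exact le_mul_of_one_le_left zero_le (by
          rw [show (1:ℝ≥0∞) = ENNReal.ofReal 1 by simp]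
          exact ENNReal.ofReal_le_ofReal (by norm_num))
    · filter_upwards [haezero] with x hx
      rw [ENNReal.ofReal_of_nonpos hx]
      exact zero_le
  · -- positive dimension
    obtain ⟨T, hT, hTd, hTball⟩ := OD.exists_tops hD
    refine ⟨OD.Sfam f l D T, fun P hP => OD.Sfam_sub_D hT hP, ?_,
      OD.Sfam_carleson hf hn hl0 hl2 hD hT hTd, ?_⟩
    · intro K hK
      obtain ⟨r, hr⟩ := hK.isBounded.subset_closedBall (0 : Fin n → ℝ)
      obtain ⟨k, hk⟩ := exists_nat_ge r
      refine ⟨T k, ⟨k, 0, rfl⟩, ?_⟩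
      refine le_trans (le_trans hr ?_) (hTball k)
      exact Metric.closedBall_subset_closedBall hk
    · have htendν := OD.nu_tops_tendsto hf hn hl0 hl2 hdecay hTball
      filter_upwards [OD.pointwise_bound hf hn hl0 hl2 hD hT] with x hx
      obtain ⟨k₀, hk₀⟩ := exists_nat_ge ‖x‖
      have hmem : ∀ k : ℕ, k₀ ≤ k → x ∈ (T k).toSet := by
        intro k hk
        apply hTball k
        rw [Metric.mem_closedBall, dist_zero_right]
        exact le_trans hk₀ (by exact_mod_cast hk)
      have hseq : ∀ᶠ k : ℕ in Filter.atTop, ENNReal.ofReal |f x| ≤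
          ENNReal.ofReal (OD.nu f (OD.lamp l) (T k)) +
          ∑' Q : (OD.Sfam f l D T), Q.1.toSet.indicator
            (fun _ => oscLambda l f Q.1.toSet) x := by
        filter_upwards [Filter.eventually_ge_atTop k₀] with k hk
        exact hx k (hmem k hk)
      have hlim : Filter.Tendsto (fun k : ℕ =>
          ENNReal.ofReal (OD.nu f (OD.lamp l) (T k)) +
          ∑' Q : (OD.Sfam f l D T), Q.1.toSet.indicator
            (fun _ => oscLambda l f Q.1.toSet) x) Filter.atTop
          (nhds (0 + ∑' Q : (OD.Sfam f l D T), Q.1.toSet.indicator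
            (fun _ => oscLambda l f Q.1.toSet) x)) := by
        apply Filter.Tendsto.add _ tendsto_const_nhds
        rw [show (0:ℝ≥0∞) = ENNReal.ofReal 0 by simp]
        exact ENNReal.tendsto_ofReal htendν
      have := ge_of_tendsto hlim hseq
      rwa [zero_add] at this
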